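/- arXiv:1506.03279 — 8 statements merged into one kernel-verified Lean document; each statement's English description precedes it below -/
import Mathlib

section
/- Let a < b be real numbers and let κ, κ' : [a,b] → ℝ be continuous functions with κ'(t) ≥ κ(t) for all t ∈ [a,b]. Let u, v : [a,b] → ℝ be twice continuously differentiable functions satisfying u''(t) + κ(t)·u(t) = 0 and v''(t) + κ'(t)·v(t) = 0 on [a,b], with u(a) = v(a) = 0, u'(a) = v'(a) = 1. If v(t) > 0 for all t ∈ (a,b], then u(t) ≥ v(t) for all t ∈ [a,b]. (J. C. F. Sturm's comparison theorem.) -/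
/-
The Wronskian `W = u'v - uv'` vanishes at `a` and `W' = (κ' - κ)uv`, so `W ≥ 0` as long as `u`
stays positive. Then `(u/v)' = W/v² ≥ 0`, and comparing right derivatives at `a`, where
`u'(a) = v'(a)`, shows `u/v ≥ 1`. So `u ≥ v` up to the first zero of `u` in `(a, b]`, which
therefore cannot exist, since `u` would dominate `v > 0` there.
-/

open Set

/-- `u` is a (twice continuously differentiable) solution of `u'' + κ·u = 0` on the set `s`,
with first and second derivative functions `u'` and `u''`. -/
def SturmSol (κ u u' u'' : ℝ → ℝ) (s : Set ℝ) : Prop :=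
  (∀ t ∈ s, HasDerivWithinAt u (u' t) s t) ∧
  (∀ t ∈ s, HasDerivWithinAt u' (u'' t) s t) ∧
  ContinuousOn u'' s ∧
  (∀ t ∈ s, u'' t + κ t * u t = 0)

open Filter Topology

section RightDerivative

variable {f g : ℝ → ℝ} {f' g' a : ℝ}

theorem HasDerivWithinAt.le_of_eventually_le (hf : HasDerivWithinAt f f' (Ioi a) a)
    (hg : HasDerivWithinAt g g' (Ioi a) a) (ha : f a = g a) (hfg : ∀ᶠ x in 𝓝[>] a, f x ≤ g x) :
    f' ≤ g' := by
  rw [hasDerivWithinAt_iff_tendsto_slope' self_notMem_Ioi] at hf hg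
  refine le_of_tendsto_of_tendsto hf hg ?_
  filter_upwards [hfg, self_mem_nhdsWithin] with x hx hax
  rw [slope_def_field, slope_def_field, ha]
  exact div_le_div_of_nonneg_right (by linarith) (sub_pos.2 hax).le

theorem HasDerivWithinAt.eventually_pos (hf : HasDerivWithinAt f f' (Ioi a) a) (ha : f a = 0)
    (hf' : 0 < f') : ∀ᶠ x in 𝓝[>] a, 0 < f x := by
  rw [hasDerivWithinAt_iff_tendsto_slope' self_notMem_Ioi] at hf
  filter_upwards [hf.eventually (eventually_gt_nhds hf'), self_mem_nhdsWithin] with x hx hax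
  rw [slope_def_field, ha, sub_zero] at hx
  exact (div_pos_iff_of_pos_right (sub_pos.2 hax)).1 hx

end RightDerivative

theorem ContinuousOn.forall_Ioc_pos {f : ℝ → ℝ} {a b : ℝ} (hf : ContinuousOn f (Icc a b))
    (hpos : ∀ᶠ x in 𝓝[>] a, 0 < f x)
    (hstep : ∀ t ∈ Ioc a b, (∀ x ∈ Ioo a t, 0 < f x) → 0 < f t) :
    ∀ t ∈ Ioc a b, 0 < f t := by
  by_contra! ⟨t, ht, hft⟩
  obtain ⟨δ, hδ, hδpos⟩ := mem_nhdsGT_iff_exists_Ioo_subset.1 hpos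
  have htδ : δ ≤ t := not_lt.1 fun h => (hδpos ⟨ht.1, h⟩ : 0 < f t).not_ge hft
  have hclosed : IsClosed (Icc δ b ∩ f ⁻¹' Iic 0) :=
    (hf.mono (Icc_subset_Icc_left hδ.le)).preimage_isClosed_of_isClosed isClosed_Icc isClosed_Iic
  obtain ⟨t₀, ⟨ht₀, hft₀⟩, hleast⟩ :=
    (isCompact_Icc.of_isClosed_subset hclosed inter_subset_left).exists_isLeast
      ⟨t, ⟨htδ, ht.2⟩, hft⟩
  refine (hstep t₀ ⟨hδ.trans_le ht₀.1, ht₀.2⟩ fun x hx => ?_).not_ge hft₀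
  by_contra! hfx
  rcases lt_or_ge x δ with hxδ | hxδ
  · exact (hδpos ⟨hx.1, hxδ⟩ : 0 < f x).not_ge hfx
  · exact (hleast ⟨⟨hxδ, hx.2.le.trans ht₀.2⟩, hfx⟩).not_gt hx.2

def wronskian (u u' v v' : ℝ → ℝ) (t : ℝ) : ℝ := u' t * v t - u t * v' t

theorem monotoneOn_div_of_wronskian_nonneg {D : Set ℝ} (hD : Convex ℝ D) {u u' v v' : ℝ → ℝ}
    (hu : ∀ t ∈ D, HasDerivWithinAt u (u' t) D t) (hv : ∀ t ∈ D, HasDerivWithinAt v (v' t) D t)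
    (hv0 : ∀ t ∈ D, v t ≠ 0) (hW : ∀ t ∈ interior D, 0 ≤ wronskian u u' v v' t) :
    MonotoneOn (u / v) D := by
  have hdiv : ∀ t ∈ D, HasDerivWithinAt (u / v) (wronskian u u' v v' t / v t ^ 2) D t :=
    fun t ht => (hu t ht).div (hv t ht) (hv0 t ht)
  exact monotoneOn_of_hasDerivWithinAt_nonneg hD
    (fun t ht => (hdiv t ht).continuousWithinAt)
    (fun t ht => (hdiv t (interior_subset ht)).mono interior_subset)
    fun t ht => div_nonneg (hW t ht) (sq_nonneg _)

namespace SturmSol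

variable {κ κ' u u₁ u₂ v v₁ v₂ : ℝ → ℝ}

theorem mono {s t : Set ℝ} (h : SturmSol κ u u₁ u₂ s) (hts : t ⊆ s) : SturmSol κ u u₁ u₂ t :=
  ⟨fun x hx => (h.1 x (hts hx)).mono hts, fun x hx => (h.2.1 x (hts hx)).mono hts,
    h.2.2.1.mono hts, fun x hx => h.2.2.2 x (hts hx)⟩

theorem continuousOn {s : Set ℝ} (h : SturmSol κ u u₁ u₂ s) : ContinuousOn u s :=
  fun t ht => (h.1 t ht).continuousWithinAt

theorem hasDerivWithinAt_Ioi_left {a b : ℝ} (h : SturmSol κ u u₁ u₂ (Icc a b)) (hab : a < b) :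
    HasDerivWithinAt u (u₁ a) (Ioi a) a :=
  (h.1 a (left_mem_Icc.2 hab.le)).mono_of_mem_nhdsWithin (Icc_mem_nhdsGT hab)

theorem hasDerivWithinAt_wronskian {s : Set ℝ} (hu : SturmSol κ u u₁ u₂ s)
    (hv : SturmSol κ' v v₁ v₂ s) {t : ℝ} (ht : t ∈ s) :
    HasDerivWithinAt (wronskian u u₁ v v₁) ((κ' t - κ t) * (u t * v t)) s t :=
  (((hu.2.1 t ht).mul (hv.1 t ht)).sub ((hu.1 t ht).mul (hv.2.1 t ht))).congr_deriv
    (by linear_combination v t * hu.2.2.2 t ht - u t * hv.2.2.2 t ht)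

variable {a d : ℝ}

theorem wronskian_nonneg (hu : SturmSol κ u u₁ u₂ (Icc a d)) (hv : SturmSol κ' v v₁ v₂ (Icc a d))
    (hle : ∀ t ∈ Ioo a d, κ t ≤ κ' t) (hua : u a = 0) (hva : v a = 0)
    (hupos : ∀ t ∈ Ioo a d, 0 < u t) (hvpos : ∀ t ∈ Ioo a d, 0 < v t) :
    ∀ t ∈ Icc a d, 0 ≤ wronskian u u₁ v v₁ t := by
  have hW := fun t (ht : t ∈ Icc a d) => hu.hasDerivWithinAt_wronskian hv ht
  have hmono : MonotoneOn (wronskian u u₁ v v₁) (Icc a d) :=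
    monotoneOn_of_hasDerivWithinAt_nonneg (convex_Icc a d)
      (fun t ht => (hW t ht).continuousWithinAt)
      (fun t ht => (hW t (interior_subset ht)).mono interior_subset) <| by
        rw [interior_Icc]
        exact fun t ht => mul_nonneg (sub_nonneg.2 (hle t ht)) (mul_pos (hupos t ht) (hvpos t ht)).le
  intro t ht
  simpa [wronskian, hua, hva] using hmono (left_mem_Icc.2 (ht.1.trans ht.2)) ht ht.1

theorem le_of_pos (had : a < d) (hle : ∀ t ∈ Ioo a d, κ t ≤ κ' t)
    (hu : SturmSol κ u u₁ u₂ (Icc a d)) (hv : SturmSol κ' v v₁ v₂ (Icc a d))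
    (hua : u a = 0) (hva : v a = 0) (hv'a : 0 < v₁ a) (h'a : v₁ a ≤ u₁ a)
    (hupos : ∀ t ∈ Ioo a d, 0 < u t) (hvpos : ∀ t ∈ Ioc a d, 0 < v t) :
    ∀ t ∈ Icc a d, v t ≤ u t := by
  have hW := wronskian_nonneg hu hv hle hua hva hupos fun t ht => hvpos t (Ioo_subset_Ioc_self ht)
  have hmono : MonotoneOn (u / v) (Ioc a d) :=
    monotoneOn_div_of_wronskian_nonneg (convex_Ioc a d) (hu.mono Ioc_subset_Icc_self).1
      (hv.mono Ioc_subset_Icc_self).1 (fun t ht => (hvpos t ht).ne') <| by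
        rw [interior_Ioc]
        exact fun t ht => hW t (Ioo_subset_Icc_self ht)
  rintro t ⟨hat, htd⟩
  rcases hat.eq_or_lt with rfl | hat
  · rw [hua, hva]
  have hvt := hvpos t ⟨hat, htd⟩
  have hcmp : u₁ a ≤ u t / v t * v₁ a := by
    refine (hu.hasDerivWithinAt_Ioi_left had).le_of_eventually_le
      ((hv.hasDerivWithinAt_Ioi_left had).const_mul _) (by simp [hua, hva]) ?_
    filter_upwards [Ioc_mem_nhdsGT hat] with x hx
    rw [← div_le_iff₀ (hvpos x ⟨hx.1, hx.2.trans htd⟩)]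
    exact hmono ⟨hx.1, hx.2.trans htd⟩ ⟨hat, htd⟩ hx.2
  have hratio : 1 ≤ u t / v t := le_of_mul_le_mul_right (by linarith) hv'a
  rwa [one_le_div hvt] at hratio

end SturmSol

theorem sturm_comparison_general
    (a b : ℝ) (hab : a < b)
    (κ κ' : ℝ → ℝ)
    (hle : ∀ t ∈ Icc a b, κ t ≤ κ' t)
    (u u₁ u₂ v v₁ v₂ : ℝ → ℝ)
    (hu : SturmSol κ u u₁ u₂ (Icc a b))
    (hv : SturmSol κ' v v₁ v₂ (Icc a b))
    (hua : u a = 0) (hva : v a = 0) (hu'a : u₁ a = 1) (hv'a : v₁ a = 1)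
    (hvpos : ∀ t ∈ Ioc a b, 0 < v t) :
    ∀ t ∈ Icc a b, v t ≤ u t := by
  have comparison (d : ℝ) (hd : d ∈ Ioc a b) (hupos : ∀ t ∈ Ioo a d, 0 < u t) :
      ∀ t ∈ Icc a d, v t ≤ u t := by
    have hsub : Icc a d ⊆ Icc a b := Icc_subset_Icc_right hd.2
    exact (hu.mono hsub).le_of_pos hd.1 (fun t ht => hle t (hsub (Ioo_subset_Icc_self ht)))
      (hv.mono hsub) hua hva (by simp [hv'a]) (by simp [hu'a, hv'a]) hupos
      fun t ht => hvpos t (Ioc_subset_Ioc_right hd.2 ht)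
  have hupos : ∀ t ∈ Ioc a b, 0 < u t :=
    hu.continuousOn.forall_Ioc_pos
      ((hu.hasDerivWithinAt_Ioi_left hab).eventually_pos hua (by simp [hu'a]))
      fun t ht hpos => (hvpos t ht).trans_le (comparison t ht hpos t (right_mem_Icc.2 ht.1.le))
  exact comparison b ⟨hab, le_rfl⟩ fun t ht => hupos t (Ioo_subset_Ioc_self ht)

/-- J. C. F. Sturm's comparison theorem. -/
theorem sturm_comparison
    (a b : ℝ) (hab : a < b)
    (κ κ' : ℝ → ℝ)
    (hκ : ContinuousOn κ (Icc a b)) (hκ' : ContinuousOn κ' (Icc a b))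
    (hle : ∀ t ∈ Icc a b, κ t ≤ κ' t)
    (u u₁ u₂ v v₁ v₂ : ℝ → ℝ)
    (hu : SturmSol κ u u₁ u₂ (Icc a b))
    (hv : SturmSol κ' v v₁ v₂ (Icc a b))
    (hua : u a = 0) (hva : v a = 0) (hu'a : u₁ a = 1) (hv'a : v₁ a = 1)
    (hvpos : ∀ t ∈ Ioc a b, 0 < v t) :
    ∀ t ∈ Icc a b, v t ≤ u t :=
  sturm_comparison_general a b hab κ κ' hle u u₁ u₂ v v₁ v₂ hu hv hua hva hu'a hv'a hvpos
end

section
/- Let a < b be real numbers and let κ, κ' : [a,b] → ℝ be continuous functions with κ'(t) ≥ κ(t) for all t ∈ [a,b]. Let u and v be solutions on [a,b] of u'' + κu = 0 and v'' + κ'v = 0 respectively. If u(a) = u(b) = 0 and u(t) > 0 for all t ∈ (a,b), then either there exists λ > 0 with u(t) = λ·v(t) for all t ∈ [a,b], or there exists x₁ ∈ (a,b] with v(x₁) = 0. (Sturm–Picone oscillation theorem.) -/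
open Set Topology Filter

/-- Auxiliary: if moreover `v > 0` on `(a, b]`, we get a contradiction. -/
lemma sturm_picone_aux
    (a b : ℝ) (hab : a < b)
    (κ κ' : ℝ → ℝ)
    (hle : ∀ t ∈ Icc a b, κ t ≤ κ' t)
    (u u₁ u₂ v v₁ v₂ : ℝ → ℝ)
    (hu : SturmSol κ u u₁ u₂ (Icc a b))
    (hv : SturmSol κ' v v₁ v₂ (Icc a b))
    (hua : u a = 0) (hub : u b = 0)
    (hupos : ∀ t ∈ Ioo a b, 0 < u t)
    (hvpos : ∀ t ∈ Ioc a b, 0 < v t) : False := by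
  obtain ⟨hud, hud', _, hueq⟩ := hu
  obtain ⟨hvd, hvd', _, hveq⟩ := hv
  have haI : a ∈ Icc a b := ⟨le_rfl, hab.le⟩
  have hbI : b ∈ Icc a b := ⟨hab.le, le_rfl⟩
  -- u is nonnegative on [a, b]
  have hune : ∀ t ∈ Icc a b, 0 ≤ u t := by
    intro t ht
    rcases eq_or_lt_of_le ht.1 with h1 | h1
    · rw [← h1, hua]
    rcases eq_or_lt_of_le ht.2 with h2 | h2
    · rw [h2, hub]
    exact (hupos t ⟨h1, h2⟩).le
  -- nontrivial one-sided filters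
  have hne1 : (𝓝[Ioc a b] a).NeBot := by
    rw [← mem_closure_iff_nhdsWithin_neBot, closure_Ioc hab.ne]
    exact haI
  have hne2 : (𝓝[Ico a b] b).NeBot := by
    rw [← mem_closure_iff_nhdsWithin_neBot, closure_Ico hab.ne]
    exact hbI
  -- v a ≥ 0
  have hva : 0 ≤ v a := by
    have hc : ContinuousWithinAt v (Ioc a b) a :=
      ((hvd a haI).continuousWithinAt).mono Ioc_subset_Icc_self
    exact ge_of_tendsto hc (Filter.eventually_of_mem self_mem_nhdsWithin
      (fun t ht => (hvpos t ht).le))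
  -- the Wronskian
  set W : ℝ → ℝ := fun t => u₁ t * v t - u t * v₁ t with hWdef
  have hW : ∀ t ∈ Icc a b, HasDerivWithinAt W ((κ' t - κ t) * (u t * v t)) (Icc a b) t := by
    intro t ht
    have h1 := ((hud' t ht).mul (hvd t ht)).sub ((hud t ht).mul (hvd' t ht))
    convert h1 using 1
    case e'_4 => rfl
    case e'_5 => rfl
    case e'_8 => rfl
    have e1 : u₂ t = -(κ t * u t) := by linarith [hueq t ht]
    have e2 : v₂ t = -(κ' t * v t) := by linarith [hveq t ht]
    rw [e1, e2]; ring
  have hWc : ContinuousOn W (Icc a b) := fun t ht => (hW t ht).continuousWithinAt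
  have hmono : MonotoneOn W (Icc a b) := by
    apply monotoneOn_of_hasDerivWithinAt_nonneg (convex_Icc a b) hWc
      (f' := fun t => (κ' t - κ t) * (u t * v t))
    · intro x hx
      exact (hW x (interior_subset hx)).mono interior_subset
    · intro x hx
      rw [interior_Icc] at hx
      have h1 : 0 ≤ u x * v x :=
        mul_nonneg (hune x (Ioo_subset_Icc_self hx)) (hvpos x ⟨hx.1, hx.2.le⟩).le
      have h2 : κ x ≤ κ' x := hle x (Ioo_subset_Icc_self hx)
      nlinarith
  -- endpoint derivatives of u
  have hu₁a : 0 ≤ u₁ a := by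
    have h := hud a haI
    rw [hasDerivWithinAt_iff_tendsto_slope, Icc_diff_left] at h
    refine ge_of_tendsto h (Filter.eventually_of_mem self_mem_nhdsWithin (fun t ht => ?_))
    rw [slope_def_field]
    have h2 := hune t (Ioc_subset_Icc_self ht)
    have h3 : 0 < t - a := by linarith [ht.1]
    apply div_nonneg <;> linarith
  have hu₁b : u₁ b ≤ 0 := by
    have h := hud b hbI
    rw [hasDerivWithinAt_iff_tendsto_slope, Icc_sdiff_right] at h
    refine le_of_tendsto h (Filter.eventually_of_mem self_mem_nhdsWithin (fun t ht => ?_))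
    rw [slope_def_field]
    have h2 := hune t (Ico_subset_Icc_self ht)
    have h3 : t - b < 0 := by linarith [ht.2]
    exact div_nonpos_of_nonneg_of_nonpos (by linarith) h3.le
  -- W vanishes on [a, b]
  have hvb : 0 < v b := hvpos b ⟨hab, le_rfl⟩
  have hWa : 0 ≤ W a := by
    simp only [hWdef, hua]
    nlinarith
  have hWb : W b ≤ 0 := by
    simp only [hWdef, hub]
    nlinarith
  have hW0 : ∀ t ∈ Icc a b, W t = 0 := by
    intro t ht
    have h1 := hmono haI ht ht.1
    have h2 := hmono ht hbI ht.2
    linarith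
  -- the quotient u / v is constant on [c, b]
  set c : ℝ := (a + b) / 2 with hcdef
  have hc : c ∈ Ioo a b := ⟨by simp [hcdef]; linarith, by simp [hcdef]; linarith⟩
  have hcb : c < b := hc.2
  have hsub : Icc c b ⊆ Icc a b := Icc_subset_Icc hc.1.le le_rfl
  have hsub' : Icc c b ⊆ Ioc a b := fun t ht => ⟨lt_of_lt_of_le hc.1 ht.1, ht.2⟩
  set g : ℝ → ℝ := fun t => u t / v t with hgdef
  have hg : ∀ t ∈ Icc c b, HasDerivWithinAt g 0 (Icc c b) t := by
    intro t ht
    have hvne : v t ≠ 0 := (hvpos t (hsub' ht)).ne'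
    have h1 := (((hud t (hsub ht)).mono hsub).div ((hvd t (hsub ht)).mono hsub) hvne)
    convert h1 using 1
    case e'_4 => rfl
    case e'_5 => rfl
    case e'_8 => rfl
    have h2 := hW0 t (hsub ht)
    simp only [hWdef] at h2
    rw [h2]
    simp
  have hconst := constant_of_derivWithin_zero
    (f := g) (a := c) (b := b)
    (fun t ht => (hg t ht).differentiableWithinAt)
    (fun t ht => (hg t (Ico_subset_Icc_self ht)).derivWithin
      (uniqueDiffOn_Icc hcb t (Ico_subset_Icc_self ht)))
  have hgb := hconst b ⟨hcb.le, le_rfl⟩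
  have hgc : 0 < g c := div_pos (hupos c hc) (hvpos c ⟨hc.1, hc.2.le⟩)
  rw [hgdef] at hgb
  simp only [hub, zero_div] at hgb
  rw [hgdef] at hgc
  linarith [hgb, hgc]

/-- The Sturm–Picone oscillation theorem. -/
theorem sturm_picone
    (a b : ℝ) (hab : a < b)
    (κ κ' : ℝ → ℝ)
    (hκ : ContinuousOn κ (Icc a b)) (hκ' : ContinuousOn κ' (Icc a b))
    (hle : ∀ t ∈ Icc a b, κ t ≤ κ' t)
    (u u₁ u₂ v v₁ v₂ : ℝ → ℝ)
    (hu : SturmSol κ u u₁ u₂ (Icc a b))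
    (hv : SturmSol κ' v v₁ v₂ (Icc a b))
    (hua : u a = 0) (hub : u b = 0)
    (hupos : ∀ t ∈ Ioo a b, 0 < u t) :
    (∃ lam : ℝ, 0 < lam ∧ ∀ t ∈ Icc a b, u t = lam * v t) ∨
      (∃ x₁ ∈ Ioc a b, v x₁ = 0) := by
  right
  by_contra hz
  push_neg at hz
  -- v has constant sign on (a, b]
  have hvcont : ContinuousOn v (Icc a b) := fun t ht => (hv.1 t ht).continuousWithinAt
  have hsign : (∀ t ∈ Ioc a b, 0 < v t) ∨ (∀ t ∈ Ioc a b, v t < 0) := by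
    by_contra h
    push_neg at h
    obtain ⟨⟨s, hs, hs'⟩, ⟨t, ht, ht'⟩⟩ := h
    have hvs : v s < 0 := lt_of_le_of_ne hs' (hz s hs)
    have hvt : 0 < v t := lt_of_le_of_ne ht' (Ne.symm (hz t ht))
    rcases le_total s t with hst | hst
    · obtain ⟨x, hx, hvx⟩ := intermediate_value_Icc hst
        (hvcont.mono (Icc_subset_Icc hs.1.le ht.2)) ⟨hvs.le, hvt.le⟩
      exact hz x ⟨lt_of_lt_of_le hs.1 hx.1, le_trans hx.2 ht.2⟩ hvx
    · obtain ⟨x, hx, hvx⟩ := intermediate_value_Icc' hst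
        (hvcont.mono (Icc_subset_Icc ht.1.le hs.2)) ⟨hvs.le, hvt.le⟩
      exact hz x ⟨lt_of_lt_of_le ht.1 hx.1, le_trans hx.2 hs.2⟩ hvx
  rcases hsign with hpos | hneg
  · exact sturm_picone_aux a b hab κ κ' hle u u₁ u₂ v v₁ v₂ hu hv hua hub hupos hpos
  · obtain ⟨hvd, hvd', hvc, hveq⟩ := hv
    refine sturm_picone_aux a b hab κ κ' hle u u₁ u₂
      (fun t => -v t) (fun t => -v₁ t) (fun t => -v₂ t) hu
      ⟨fun t ht => (hvd t ht).neg, fun t ht => (hvd' t ht).neg, hvc.neg,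
        fun t ht => by have := hveq t ht; ring_nf; ring_nf at this; linarith⟩
      hua hub hupos (fun t ht => by simpa using (hneg t ht))
end

section
/- Let θ > 0 and let κ, κ' : [0,θ] → ℝ be continuous with κ(x) ≥ κ'(x) for all x ∈ [0,θ]. Let f, g : [0,1] → ℝ be twice continuously differentiable functions with f(0) = g(0) = 0, f(1) = g(1) = 1, f(t) > 0 and g(t) > 0 for all t ∈ (0,1], satisfying f''(t) + κ(tθ)·θ²·f(t) = 0 and g''(t) + κ'(tθ)·θ²·g(t) = 0 on [0,1]. Then f(t) ≥ g(t) for all t ∈ [0,1]. (Monotonicity of the distortion coefficients σ_κ^{(t)}(θ) in the curvature function κ.) -/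
open Set

/-!
Sturm comparison via the Wronskian `W = f' g - f g'`. From the equations,
`W' = (κ' - κ) θ² f g ≤ 0`, and `W 0 = 0`, so `W ≤ 0` on `[0,1]`. Since `(g / f)' = -W / f²`, the
quotient `g / f` is nondecreasing on `(0,1]`, hence `g t / f t ≤ g 1 / f 1 = 1`.
-/

variable {s : Set ℝ}

theorem SturmSol.continuousOn_s2 {κ u u' u'' : ℝ → ℝ} (hu : SturmSol κ u u' u'' s) :
    ContinuousOn u s :=
  fun t ht => (hu.1 t ht).continuousWithinAt

theorem SturmSol.continuousOn_deriv {κ u u' u'' : ℝ → ℝ} (hu : SturmSol κ u u' u'' s) :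
    ContinuousOn u' s :=
  fun t ht => (hu.2.1 t ht).continuousWithinAt

theorem SturmSol.antitoneOn_wronskian (hs : Convex ℝ s) {p q f f₁ f₂ g g₁ g₂ : ℝ → ℝ}
    (hf : SturmSol p f f₁ f₂ s) (hg : SturmSol q g g₁ g₂ s) (hqp : ∀ t ∈ s, q t ≤ p t)
    (hf_nonneg : ∀ t ∈ s, 0 ≤ f t) (hg_nonneg : ∀ t ∈ s, 0 ≤ g t) :
    AntitoneOn (fun t => f₁ t * g t - f t * g₁ t) s := by
  have hcont : ContinuousOn (fun t => f₁ t * g t - f t * g₁ t) s :=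
    (hf.continuousOn_deriv.mul hg.continuousOn_s2).sub (hf.continuousOn_s2.mul hg.continuousOn_deriv)
  obtain ⟨hfd, hfd₁, -, hfe⟩ := hf
  obtain ⟨hgd, hgd₁, -, hge⟩ := hg
  refine antitoneOn_of_hasDerivWithinAt_nonpos hs hcont (f' := fun t => f₂ t * g t - f t * g₂ t)
    (fun t ht => ?_) (fun t ht => ?_)
  · have ht' := interior_subset ht
    exact (((hfd₁ t ht').mul (hgd t ht')).sub ((hfd t ht').mul (hgd₁ t ht'))).mono
      interior_subset |>.congr_deriv (by ring)
  · have ht' := interior_subset ht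
    have hW' : f₂ t * g t - f t * g₂ t = (q t - p t) * (f t * g t) := by
      linear_combination g t * hfe t ht' - f t * hge t ht'
    rw [hW']
    exact mul_nonpos_of_nonpos_of_nonneg (sub_nonpos.2 (hqp t ht'))
      (mul_nonneg (hf_nonneg t ht') (hg_nonneg t ht'))

theorem monotoneOn_div_of_wronskian_nonpos (hs : Convex ℝ s) {f f₁ g g₁ : ℝ → ℝ}
    (hf : ∀ t ∈ s, HasDerivWithinAt f (f₁ t) s t) (hg : ∀ t ∈ s, HasDerivWithinAt g (g₁ t) s t)
    (hf_pos : ∀ t ∈ s, 0 < f t) (hW : ∀ t ∈ s, f₁ t * g t - f t * g₁ t ≤ 0) :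
    MonotoneOn (fun t => g t / f t) s := by
  refine monotoneOn_of_hasDerivWithinAt_nonneg hs
    (f' := fun t => (g₁ t * f t - g t * f₁ t) / f t ^ 2)
    (fun t ht => ((hg t ht).continuousWithinAt.div (hf t ht).continuousWithinAt
      (hf_pos t ht).ne')) (fun t ht => ?_) (fun t ht => ?_)
  · have ht' := interior_subset ht
    exact ((hg t ht').div (hf t ht') (hf_pos t ht').ne').mono interior_subset
  · have ht' := interior_subset ht
    exact div_nonneg (by linarith [hW t ht']) (sq_nonneg _)

theorem distortion_monotone_general
    (θ : ℝ) (hθ : 0 < θ)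
    (κ κ' : ℝ → ℝ)
    (hle : ∀ x ∈ Icc 0 θ, κ' x ≤ κ x)
    (f f₁ f₂ g g₁ g₂ : ℝ → ℝ)
    (hf : SturmSol (fun t => κ (t * θ) * θ ^ 2) f f₁ f₂ (Icc 0 1))
    (hg : SturmSol (fun t => κ' (t * θ) * θ ^ 2) g g₁ g₂ (Icc 0 1))
    (hf0 : f 0 = 0) (hg0 : g 0 = 0) (hf1 : f 1 = 1) (hg1 : g 1 = 1)
    (hfpos : ∀ t ∈ Ioc (0:ℝ) 1, 0 < f t)
    (hgpos : ∀ t ∈ Ioc (0:ℝ) 1, 0 < g t) :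
    ∀ t ∈ Icc (0:ℝ) 1, g t ≤ f t := by
  have hκ : ∀ t ∈ Icc (0:ℝ) 1, κ' (t * θ) * θ ^ 2 ≤ κ (t * θ) * θ ^ 2 := fun t ht =>
    mul_le_mul_of_nonneg_right (hle _ ⟨mul_nonneg ht.1 hθ.le, mul_le_of_le_one_left hθ.le ht.2⟩)
      (sq_nonneg θ)
  have hf_nonneg : ∀ t ∈ Icc (0:ℝ) 1, 0 ≤ f t := fun t ht =>
    ht.1.eq_or_lt.elim (fun h => h ▸ hf0.ge) (fun h => (hfpos t ⟨h, ht.2⟩).le)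
  have hg_nonneg : ∀ t ∈ Icc (0:ℝ) 1, 0 ≤ g t := fun t ht =>
    ht.1.eq_or_lt.elim (fun h => h ▸ hg0.ge) (fun h => (hgpos t ⟨h, ht.2⟩).le)
  have hW : ∀ t ∈ Icc (0:ℝ) 1, f₁ t * g t - f t * g₁ t ≤ 0 := fun t ht =>
    (hf.antitoneOn_wronskian (convex_Icc 0 1) hg hκ hf_nonneg hg_nonneg
      ⟨le_rfl, zero_le_one⟩ ht ht.1).trans_eq (by simp [hf0, hg0])
  intro t ht
  obtain rfl | ht₀ := ht.1.eq_or_lt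
  · simp [hf0, hg0]
  have hsub : Icc t 1 ⊆ Icc 0 1 := Icc_subset_Icc_left ht.1
  have hquot := monotoneOn_div_of_wronskian_nonpos (convex_Icc t 1)
    (fun s hs => (hf.1 s (hsub hs)).mono hsub) (fun s hs => (hg.1 s (hsub hs)).mono hsub)
    (fun s hs => hfpos s ⟨ht₀.trans_le hs.1, hs.2⟩) (fun s hs => hW s (hsub hs))
    ⟨le_rfl, ht.2⟩ ⟨ht.2, le_rfl⟩ ht.2
  simp only [hf1, hg1, div_one] at hquot
  exact (div_le_one (hfpos t ⟨ht₀, ht.2⟩)).1 hquot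

/-- Monotonicity of the distortion coefficients `σ_κ^{(t)}(θ)` in the curvature function `κ`. -/
theorem distortion_monotone
    (θ : ℝ) (hθ : 0 < θ)
    (κ κ' : ℝ → ℝ)
    (hκ : ContinuousOn κ (Icc 0 θ)) (hκ' : ContinuousOn κ' (Icc 0 θ))
    (hle : ∀ x ∈ Icc 0 θ, κ' x ≤ κ x)
    (f f₁ f₂ g g₁ g₂ : ℝ → ℝ)
    (hf : SturmSol (fun t => κ (t * θ) * θ ^ 2) f f₁ f₂ (Icc 0 1))
    (hg : SturmSol (fun t => κ' (t * θ) * θ ^ 2) g g₁ g₂ (Icc 0 1))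
    (hf0 : f 0 = 0) (hg0 : g 0 = 0) (hf1 : f 1 = 1) (hg1 : g 1 = 1)
    (hfpos : ∀ t ∈ Ioc (0:ℝ) 1, 0 < f t)
    (hgpos : ∀ t ∈ Ioc (0:ℝ) 1, 0 < g t) :
    ∀ t ∈ Icc (0:ℝ) 1, g t ≤ f t :=
  distortion_monotone_general θ hθ κ κ' hle f f₁ f₂ g g₁ g₂ hf hg hf0 hg0 hf1 hg1 hfpos hgpos
end

section
/- Let a < b be real numbers, let κₙ, κ : [a,b] → ℝ be continuous functions (n ∈ ℕ) with κₙ → κ uniformly on [a,b]. Let uₙ and u be the solutions on [a,b] of w'' + κₙw = 0 and w'' + κw = 0 respectively, each with w(a) = 0 and w'(a) = 1. Then uₙ → u uniformly on [a,b], and uₙ' → u' uniformly on [a,b]. (Stability of solutions of the Sturm–Liouville equation under uniform convergence of the coefficient.) -/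
/-! Written as the first-order system `(u, u')' = (u', -κ u)`, the limit solution `u` is an
approximate trajectory of the system for `κₙ`, with defect `|κₙ - κ| |u| ≤ ‖κₙ - κ‖∞ · max |u|`.
Grönwall's inequality for approximate trajectories, with the eventually uniform Lipschitz constant
`max 1 (sup |κₙ|)`, bounds the distance between `(uₙ, uₙ')` and `(u, u')` on `[a, b]` by a
quantity that tends to `0` with `‖κₙ - κ‖∞`. -/

open Set

open Filter Topology

/-- The equation `u'' + κ u = 0` as the first-order system `(u, u')' = sturmField κ t (u, u')`. -/
def sturmField (κ : ℝ → ℝ) (t : ℝ) (p : ℝ × ℝ) : ℝ × ℝ :=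
  (p.2, -κ t * p.1)

lemma lipschitzWith_sturmField (κ : ℝ → ℝ) (t : ℝ) :
    LipschitzWith (max 1 ‖κ t‖₊) (sturmField κ t) := by
  have h := LipschitzWith.prod_snd.prodMk
    ((lipschitzWith_smul (-κ t)).comp (LipschitzWith.prod_fst (α := ℝ) (β := ℝ)))
  unfold sturmField
  simpa [nnnorm_neg] using h

section

variable {κ u u' u'' : ℝ → ℝ} {a b : ℝ}

lemma SturmSol.continuousOn_prod (h : SturmSol κ u u' u'' (Icc a b)) :
    ContinuousOn (fun t => (u t, u' t)) (Icc a b) :=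
  fun t ht => ((h.1 t ht).continuousWithinAt).prodMk (h.2.1 t ht).continuousWithinAt

lemma SturmSol.hasDerivWithinAt_prod (h : SturmSol κ u u' u'' (Icc a b)) {t : ℝ}
    (ht : t ∈ Ico a b) :
    HasDerivWithinAt (fun t => (u t, u' t)) (u' t, u'' t) (Ici t) t := by
  have hIcc : Icc a b ∈ 𝓝[Ici t] t := Icc_mem_nhdsGE_of_mem ht
  exact ((h.1 t (Ico_subset_Icc_self ht)).prodMk
    (h.2.1 t (Ico_subset_Icc_self ht))).mono_of_mem_nhdsWithin hIcc

lemma SturmSol.dist_sturmField_eq {κ₀ : ℝ → ℝ} (h : SturmSol κ u u' u'' (Icc a b)) {t : ℝ}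
    (ht : t ∈ Icc a b) :
    dist (u' t, u'' t) (sturmField κ₀ t (u t, u' t)) = |κ₀ t - κ t| * |u t| := by
  have hu'' : u'' t = -κ t * u t := by linear_combination h.2.2.2 t ht
  simp [sturmField, Prod.dist_eq, Real.dist_eq, hu'', ← abs_mul]
  rw [abs_sub_comm]
  ring_nf

end

theorem SturmSol.dist_le_gronwallBound {κ₁ κ₂ u₁ u₁' u₁'' u₂ u₂' u₂'' : ℝ → ℝ} {a b δ ε K : ℝ}
    (h₁ : SturmSol κ₁ u₁ u₁' u₁'' (Icc a b)) (h₂ : SturmSol κ₂ u₂ u₂' u₂'' (Icc a b))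
    (hK : ∀ t ∈ Icc a b, |κ₁ t| ≤ K) (hK1 : 1 ≤ K)
    (hε : ∀ t ∈ Icc a b, |κ₁ t - κ₂ t| * |u₂ t| ≤ ε)
    (ha : dist (u₁ a, u₁' a) (u₂ a, u₂' a) ≤ δ) {t : ℝ} (ht : t ∈ Icc a b) :
    dist (u₁ t, u₁' t) (u₂ t, u₂' t) ≤ gronwallBound δ K ε (t - a) := by
  have hLip : ∀ s ∈ Ico a b, LipschitzOnWith K.toNNReal (sturmField κ₁ s) univ := by
    intro s hs
    refine ((lipschitzWith_sturmField κ₁ s).weaken ?_).lipschitzOnWith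
    rw [max_le_iff, ← NNReal.coe_le_coe, ← NNReal.coe_le_coe, coe_nnnorm,
      Real.coe_toNNReal _ (by linarith)]
    exact ⟨by simpa, hK s (Ico_subset_Icc_self hs)⟩
  -- `(u₂, u₂')` is an approximate trajectory of the field of `κ₁`, with defect `|κ₁ - κ₂| |u₂|`.
  have := dist_le_of_approx_trajectories_ODE_of_mem (εf := 0) hLip h₁.continuousOn_prod
    (fun s hs => h₁.hasDerivWithinAt_prod hs)
    (fun s hs => by simp [h₁.dist_sturmField_eq (Ico_subset_Icc_self hs)])
    (fun _ _ => mem_univ _) h₂.continuousOn_prod (fun s hs => h₂.hasDerivWithinAt_prod hs)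
    (fun s hs => (h₂.dist_sturmField_eq (Ico_subset_Icc_self hs)).trans_le
      (hε s (Ico_subset_Icc_self hs))) (fun _ _ => mem_univ _) ha t ht
  rwa [zero_add, Real.coe_toNNReal _ (by linarith)] at this

lemma TendstoUniformlyOn.eventually_norm_le_add {ι α β : Type*} [SeminormedAddCommGroup β]
    {p : Filter ι} {F : ι → α → β} {f : α → β} {s : Set α} {C ε : ℝ}
    (hF : TendstoUniformlyOn F f p s) (hf : ∀ x ∈ s, ‖f x‖ ≤ C) (hε : 0 < ε) :
    ∀ᶠ n in p, ∀ x ∈ s, ‖F n x‖ ≤ C + ε := by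
  filter_upwards [Metric.tendstoUniformlyOn_iff.1 hF ε hε] with n hn x hx
  have := norm_le_norm_add_norm_sub' (F n x) (f x)
  rw [norm_sub_rev, ← dist_eq_norm] at this
  linarith [hf x hx, hn x hx]

lemma tendstoUniformlyOn_of_forall_dist_le {ι α β : Type*} [PseudoMetricSpace β] {p : Filter ι}
    {F : ι → α → β} {f : α → β} {s : Set α} {g : ℝ → ℝ} (hg : Tendsto g (𝓝[>] 0) (𝓝 0))
    (h : ∀ δ > 0, ∀ᶠ n in p, ∀ x ∈ s, dist (f x) (F n x) ≤ g δ) :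
    TendstoUniformlyOn F f p s := by
  rw [Metric.tendstoUniformlyOn_iff]
  intro η hη
  obtain ⟨δ, hgδ, hδ⟩ :=
    ((hg.eventually (gt_mem_nhds hη)).and self_mem_nhdsWithin).exists
  filter_upwards [h δ hδ] with n hn x hx
  exact (hn x hx).trans_lt hgδ

theorem sturm_stability_general
    (a b : ℝ)
    (κn : ℕ → ℝ → ℝ) (κ : ℝ → ℝ)
    (hκ : ContinuousOn κ (Icc a b))
    (hconv : TendstoUniformlyOn κn κ Filter.atTop (Icc a b))
    (un un' un'' : ℕ → ℝ → ℝ) (u u' u'' : ℝ → ℝ)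
    (hun : ∀ n, SturmSol (κn n) (un n) (un' n) (un'' n) (Icc a b))
    (hu : SturmSol κ u u' u'' (Icc a b))
    (huna : ∀ n, un n a = 0) (hun'a : ∀ n, un' n a = 1)
    (hua : u a = 0) (hu'a : u' a = 1) :
    TendstoUniformlyOn un u Filter.atTop (Icc a b) ∧
      TendstoUniformlyOn un' u' Filter.atTop (Icc a b) := by
  obtain ⟨M, hM⟩ := isCompact_Icc.exists_bound_of_continuousOn
    (fun t ht => (hu.1 t ht).continuousWithinAt)
  obtain ⟨C, hC⟩ := isCompact_Icc.exists_bound_of_continuousOn hκ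
  set K := max 1 (C + 1)
  have hbound : ∀ δ > 0, ∀ᶠ n in atTop, ∀ t ∈ Icc a b,
      dist (u t, u' t) (un n t, un' n t) ≤ gronwallBound 0 K (δ * M) (b - a) := by
    intro δ hδ
    filter_upwards [hconv.eventually_norm_le_add hC one_pos,
      Metric.tendstoUniformlyOn_iff.1 hconv δ hδ] with n hn1 hnδ t ht
    have hK : ∀ s ∈ Icc a b, |κn n s| ≤ K := fun s hs => (hn1 s hs).trans (le_max_right _ _)
    have hε : ∀ s ∈ Icc a b, |κn n s - κ s| * |u s| ≤ δ * M := fun s hs => by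
      rw [abs_sub_comm, ← Real.dist_eq]
      exact mul_le_mul (hnδ s hs).le (hM s hs) (abs_nonneg _) hδ.le
    have hM0 : 0 ≤ M := (norm_nonneg _).trans (hM t ht)
    calc dist (u t, u' t) (un n t, un' n t) = dist (un n t, un' n t) (u t, u' t) := dist_comm _ _
      _ ≤ gronwallBound 0 K (δ * M) (t - a) :=
        (hun n).dist_le_gronwallBound hu hK (le_max_left _ _) hε
          (by simp [huna, hun'a, hua, hu'a]) ht
      _ ≤ gronwallBound 0 K (δ * M) (b - a) :=
        gronwallBound_mono le_rfl (by positivity) (by positivity) (by linarith [ht.2])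
  have hg : Tendsto (fun δ => gronwallBound 0 K (δ * M) (b - a)) (𝓝[>] 0) (𝓝 0) := by
    have hcont : Continuous fun δ => gronwallBound 0 K (δ * M) (b - a) :=
      (gronwallBound_continuous_ε 0 K (b - a)).comp (continuous_mul_const M)
    exact (hcont.tendsto' 0 0 (by simp [gronwallBound_ε0_δ0])).mono_left nhdsWithin_le_nhds
  have hpair := tendstoUniformlyOn_of_forall_dist_le hg hbound
  exact ⟨uniformContinuous_fst.comp_tendstoUniformlyOn hpair,
    uniformContinuous_snd.comp_tendstoUniformlyOn hpair⟩

/-- Stability of solutions of the Sturm–Liouville equation under uniform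
convergence of the coefficient. -/
theorem sturm_stability
    (a b : ℝ) (hab : a < b)
    (κn : ℕ → ℝ → ℝ) (κ : ℝ → ℝ)
    (hκn : ∀ n, ContinuousOn (κn n) (Icc a b)) (hκ : ContinuousOn κ (Icc a b))
    (hconv : TendstoUniformlyOn κn κ Filter.atTop (Icc a b))
    (un un' un'' : ℕ → ℝ → ℝ) (u u' u'' : ℝ → ℝ)
    (hun : ∀ n, SturmSol (κn n) (un n) (un' n) (un'' n) (Icc a b))
    (hu : SturmSol κ u u' u'' (Icc a b))
    (huna : ∀ n, un n a = 0) (hun'a : ∀ n, un' n a = 1)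
    (hua : u a = 0) (hu'a : u' a = 1) :
    TendstoUniformlyOn un u Filter.atTop (Icc a b) ∧
      TendstoUniformlyOn un' u' Filter.atTop (Icc a b) :=
  sturm_stability_general a b κn κ hκ hconv un un' un'' u u' u'' hun hu huna hun'a hua hu'a
end

section
/- Let a < b be real numbers and let κ : [a,b] → ℝ be continuous. Suppose there exists a solution v of v'' + κv = 0 on [a,b] which is not identically zero and has two distinct zeros t₀ < t₁ with t₀, t₁ ∈ (a,b) (strictly interior). Then every nonnegative twice continuously differentiable function u : [a,b] → ℝ with u''(t) + κ(t)·u(t) ≤ 0 for all t ∈ (a,b) is identically zero on [a,b]. -/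
open Set

lemma antiAux {f f' : ℝ → ℝ} {x y : ℝ}
    (hcont : ContinuousOn f (Icc x y))
    (hder : ∀ t ∈ Ioo x y, HasDerivAt f (f' t) t)
    (hnp : ∀ t ∈ Ioo x y, f' t ≤ 0) : AntitoneOn f (Icc x y) := by
  apply antitoneOn_of_deriv_nonpos (convex_Icc x y) hcont
  · rw [interior_Icc]
    exact fun t ht => (hder t ht).differentiableAt.differentiableWithinAt
  · rw [interior_Icc]
    intro t ht
    rw [(hder t ht).deriv]
    exact hnp t ht

lemma monoAux {f f' : ℝ → ℝ} {x y : ℝ}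
    (hcont : ContinuousOn f (Icc x y))
    (hder : ∀ t ∈ Ioo x y, HasDerivAt f (f' t) t)
    (hnn : ∀ t ∈ Ioo x y, 0 ≤ f' t) : MonotoneOn f (Icc x y) := by
  apply monotoneOn_of_deriv_nonneg (convex_Icc x y) hcont
  · rw [interior_Icc]
    exact fun t ht => (hder t ht).differentiableAt.differentiableWithinAt
  · rw [interior_Icc]
    intro t ht
    rw [(hder t ht).deriv]
    exact hnn t ht

lemma expMulDeriv {K : ℝ} {E : ℝ → ℝ} {d s : ℝ} (h : HasDerivAt E d s) :
    HasDerivAt (fun x => E x * Real.exp (K * x)) ((d + K * E s) * Real.exp (K * s)) s := by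
  have hexp : HasDerivAt (fun x => Real.exp (K * x)) (Real.exp (K * s) * (K * 1)) s :=
    ((hasDerivAt_id s).const_mul K).exp
  have h2 : HasDerivAt (fun x => E x * Real.exp (K * x))
      (d * Real.exp (K * s) + E s * (Real.exp (K * s) * (K * 1))) s := h.mul hexp
  convert h2 using 1
  ring

/-- Uniqueness: a solution of `v'' + κv = 0` vanishing to first order at a point of `[a,b]`
vanishes identically on `[a,b]`. -/
lemma sturm_unique (a b : ℝ) (κ : ℝ → ℝ) (hκ : ContinuousOn κ (Icc a b))
    (v v₁ v₂ : ℝ → ℝ) (hv : SturmSol κ v v₁ v₂ (Icc a b))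
    (c : ℝ) (hc : c ∈ Icc a b) (h0 : v c = 0) (h1 : v₁ c = 0) :
    ∀ t ∈ Icc a b, v t = 0 := by
  obtain ⟨hd, hd1, _, heq⟩ := hv
  have hvc : ContinuousOn v (Icc a b) :=
    fun t ht => (hd t ht).differentiableWithinAt.continuousWithinAt
  have hv1c : ContinuousOn v₁ (Icc a b) :=
    fun t ht => (hd1 t ht).differentiableWithinAt.continuousWithinAt
  have hva : ∀ t ∈ Ioo a b, HasDerivAt v (v₁ t) t :=
    fun t ht => (hd t (Ioo_subset_Icc_self ht)).hasDerivAt (Icc_mem_nhds ht.1 ht.2)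
  have hv1a : ∀ t ∈ Ioo a b, HasDerivAt v₁ (v₂ t) t :=
    fun t ht => (hd1 t (Ioo_subset_Icc_self ht)).hasDerivAt (Icc_mem_nhds ht.1 ht.2)
  obtain ⟨K, hK⟩ : ∃ K, ∀ t ∈ Icc a b, |1 - κ t| ≤ K := by
    obtain ⟨K, hK⟩ := isCompact_Icc.exists_bound_of_continuousOn
      (continuousOn_const.sub hκ : ContinuousOn (fun t => 1 - κ t) (Icc a b))
    exact ⟨K, fun t ht => by simpa using hK t ht⟩
  have hK0 : 0 ≤ K := le_trans (abs_nonneg _) (hK c hc)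
  set E : ℝ → ℝ := fun t => v t * v t + v₁ t * v₁ t with hEdef
  set D : ℝ → ℝ := fun t => v₁ t * v t + v t * v₁ t + (v₂ t * v₁ t + v₁ t * v₂ t) with hDdef
  have hE : ∀ s, E s = v s * v s + v₁ s * v₁ s := fun _ => rfl
  have hD : ∀ s, D s = v₁ s * v s + v s * v₁ s + (v₂ s * v₁ s + v₁ s * v₂ s) := fun _ => rfl
  have hEcont : ContinuousOn E (Icc a b) := ((hvc.mul hvc).add (hv1c.mul hv1c))
  have hEder : ∀ t ∈ Ioo a b, HasDerivAt E (D t) t :=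
    fun t ht => ((hva t ht).mul (hva t ht)).add ((hv1a t ht).mul (hv1a t ht))
  have hEbound : ∀ t ∈ Ioo a b, |D t| ≤ K * E t := by
    intro t ht
    have hveq : v₂ t = -(κ t * v t) := by
      have := heq t (Ioo_subset_Icc_self ht); linarith
    have h2 : |2 * (v t * v₁ t)| ≤ E t := by
      rw [hE, abs_le]
      constructor <;> nlinarith [sq_nonneg (v t + v₁ t), sq_nonneg (v t - v₁ t)]
    have hKt := hK t (Ioo_subset_Icc_self ht)
    have hDt : D t = (1 - κ t) * (2 * (v t * v₁ t)) := by rw [hD, hveq]; ring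
    rw [hDt, abs_mul]
    calc |1 - κ t| * |2 * (v t * v₁ t)| ≤ K * |2 * (v t * v₁ t)| :=
          mul_le_mul_of_nonneg_right hKt (abs_nonneg _)
      _ ≤ K * E t := mul_le_mul_of_nonneg_left h2 hK0
  have hEnonneg : ∀ t, 0 ≤ E t := fun t => by
    rw [hE]; exact add_nonneg (mul_self_nonneg _) (mul_self_nonneg _)
  have hEc : E c = 0 := by rw [hE, h0, h1]; ring
  have hexpcont : ∀ M : ℝ, ContinuousOn (fun x => Real.exp (M * x)) (Icc a b) :=
    fun M => (Real.continuous_exp.comp (continuous_const.mul continuous_id)).continuousOn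
  have hEzero : ∀ t ∈ Icc a b, E t = 0 := by
    intro t ht
    rcases le_total c t with hct | htc
    · have hg : AntitoneOn (fun x => E x * Real.exp (-K * x)) (Icc a b) := by
        apply antiAux (f' := fun s => (D s + (-K) * E s) * Real.exp (-K * s))
          (hEcont.mul (hexpcont (-K))) (fun s hs => expMulDeriv (hEder s hs))
        intro s hs
        have hb := (abs_le.mp (hEbound s hs)).2
        have he := (Real.exp_pos (-K * s)).le
        exact mul_nonpos_of_nonpos_of_nonneg (by linarith) he
      have h2 : E t * Real.exp (-K * t) ≤ E c * Real.exp (-K * c) := hg hc ht hct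
      rw [hEc, zero_mul] at h2
      have h3 := hEnonneg t
      nlinarith [Real.exp_pos (-K * t)]
    · have hg : MonotoneOn (fun x => E x * Real.exp (K * x)) (Icc a b) := by
        apply monoAux (f' := fun s => (D s + K * E s) * Real.exp (K * s))
          (hEcont.mul (hexpcont K)) (fun s hs => expMulDeriv (hEder s hs))
        intro s hs
        have hb := (abs_le.mp (hEbound s hs)).1
        have he := (Real.exp_pos (K * s)).le
        exact mul_nonneg (by linarith) he
      have h2 : E t * Real.exp (K * t) ≤ E c * Real.exp (K * c) := hg ht hc htc
      rw [hEc, zero_mul] at h2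
      have h3 := hEnonneg t
      nlinarith [Real.exp_pos (K * t)]
  intro t ht
  have h4 : v t * v t + v₁ t * v₁ t = 0 := by rw [← hE]; exact hEzero t ht
  have : v t * v t = 0 := by nlinarith [mul_self_nonneg (v t), mul_self_nonneg (v₁ t)]
  exact mul_self_eq_zero.mp this

/-- A nonnegative supersolution with an interior zero vanishes identically. -/
lemma spread_zero (a b : ℝ) (κ : ℝ → ℝ) (C : ℝ)
    (hC : ∀ t ∈ Icc a b, |κ t| ≤ C) (hC0 : 0 ≤ C)
    (u u₁ u₂ : ℝ → ℝ)
    (hu : ∀ t ∈ Icc a b, HasDerivWithinAt u (u₁ t) (Icc a b) t)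
    (hu₁ : ∀ t ∈ Icc a b, HasDerivWithinAt u₁ (u₂ t) (Icc a b) t)
    (hupos : ∀ t ∈ Icc a b, 0 ≤ u t)
    (hineq : ∀ t ∈ Ioo a b, u₂ t + κ t * u t ≤ 0)
    (c : ℝ) (hc : c ∈ Ioo a b) (huc : u c = 0) :
    ∀ t ∈ Icc a b, u t = 0 := by
  have hcI : c ∈ Icc a b := Ioo_subset_Icc_self hc
  have huc' : ContinuousOn u (Icc a b) :=
    fun t ht => (hu t ht).differentiableWithinAt.continuousWithinAt
  have hu₁c : ContinuousOn u₁ (Icc a b) :=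
    fun t ht => (hu₁ t ht).differentiableWithinAt.continuousWithinAt
  have hua : ∀ t ∈ Ioo a b, HasDerivAt u (u₁ t) t :=
    fun t ht => (hu t (Ioo_subset_Icc_self ht)).hasDerivAt (Icc_mem_nhds ht.1 ht.2)
  have hu₁a : ∀ t ∈ Ioo a b, HasDerivAt u₁ (u₂ t) t :=
    fun t ht => (hu₁ t (Ioo_subset_Icc_self ht)).hasDerivAt (Icc_mem_nhds ht.1 ht.2)
  set K : ℝ := Real.sqrt C with hKdef
  have hK0 : 0 ≤ K := Real.sqrt_nonneg C
  have hK2 : K * K = C := Real.mul_self_sqrt hC0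
  have hu2le : ∀ t ∈ Ioo a b, u₂ t ≤ C * u t := by
    intro t ht
    have h1 := hineq t ht
    have h2 := (abs_le.mp (hC t (Ioo_subset_Icc_self ht))).1
    have h3 := hupos t (Ioo_subset_Icc_self ht)
    nlinarith [mul_le_mul_of_nonneg_right (show -κ t ≤ C by linarith) h3]
  have hu₁c0 : u₁ c = 0 := by
    have hlm : IsLocalMin u c := by
      filter_upwards [Icc_mem_nhds hc.1 hc.2] with x hx
      rw [huc]; exact hupos x hx
    exact hlm.hasDerivAt_eq_zero (hua c hc)
  have key : ∀ s : ℝ, s * s = C →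
      AntitoneOn (fun x => (u₁ x + s * u x) * Real.exp (-s * x)) (Icc a b) := by
    intro s hs
    apply antiAux (f' := fun t => (u₂ t + s * u₁ t + (-s) * (u₁ t + s * u t)) * Real.exp (-s * t))
    · exact (hu₁c.add (continuousOn_const.mul huc')).mul
        (Real.continuous_exp.comp (continuous_const.mul continuous_id)).continuousOn
    · intro t ht
      have h := expMulDeriv (K := -s) (E := fun x => u₁ x + s * u x)
        ((hu₁a t ht).add ((hua t ht).const_mul s))
      convert h using 1 <;> ring_nf
    · intro t ht
      have h1 := hu2le t ht
      have he := (Real.exp_pos (-s * t)).le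
      apply mul_nonpos_of_nonpos_of_nonneg _ he
      have hsu : s * s * u t = C * u t := by rw [hs]
      nlinarith [hsu, h1]
  intro t ht
  rcases le_total c t with hct | htc
  · have hf := key (-K) (by nlinarith)
    have hfor : ∀ x ∈ Icc c b, u₁ x ≤ K * u x := by
      intro x hx
      have hxI : x ∈ Icc a b := ⟨le_trans hcI.1 hx.1, hx.2⟩
      have h2 : (u₁ x + -K * u x) * Real.exp (-(-K) * x)
          ≤ (u₁ c + -K * u c) * Real.exp (-(-K) * c) := hf hcI hxI hx.1
      rw [huc, hu₁c0] at h2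
      simp only [mul_zero, add_zero, zero_mul] at h2
      nlinarith [Real.exp_pos (-(-K) * x)]
    have hanti : AntitoneOn (fun x => u x * Real.exp (-K * x)) (Icc c b) := by
      apply antiAux (f' := fun x => (u₁ x + (-K) * u x) * Real.exp (-K * x))
      · exact (huc'.mono (Icc_subset_Icc hcI.1 le_rfl)).mul
          (Real.continuous_exp.comp (continuous_const.mul continuous_id)).continuousOn
      · intro x hx
        have := expMulDeriv (K := -K) (E := u) (hua x ⟨lt_of_lt_of_le hc.1 hx.1.le, hx.2⟩)
        convert this using 1 <;> ring_nf
      · intro x hx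
        have h1 := hfor x (Ioo_subset_Icc_self hx)
        have he := (Real.exp_pos (-K * x)).le
        apply mul_nonpos_of_nonpos_of_nonneg _ he
        linarith
    have h2 : u t * Real.exp (-K * t) ≤ u c * Real.exp (-K * c) :=
      hanti ⟨le_rfl, le_trans hct ht.2⟩ ⟨hct, ht.2⟩ hct
    rw [huc, zero_mul] at h2
    have h3 := hupos t ht
    nlinarith [Real.exp_pos (-K * t)]
  · have hf := key K hK2
    have hback : ∀ x ∈ Icc a c, 0 ≤ u₁ x + K * u x := by
      intro x hx
      have hxI : x ∈ Icc a b := ⟨hx.1, le_trans hx.2 hcI.2⟩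
      have h2 : (u₁ c + K * u c) * Real.exp (-K * c)
          ≤ (u₁ x + K * u x) * Real.exp (-K * x) := hf hxI hcI hx.2
      rw [huc, hu₁c0] at h2
      simp only [mul_zero, add_zero, zero_mul] at h2
      nlinarith [Real.exp_pos (-K * x)]
    have hmono : MonotoneOn (fun x => u x * Real.exp (K * x)) (Icc a c) := by
      apply monoAux (f' := fun x => (u₁ x + K * u x) * Real.exp (K * x))
      · exact (huc'.mono (Icc_subset_Icc le_rfl hcI.2)).mul
          (Real.continuous_exp.comp (continuous_const.mul continuous_id)).continuousOn
      · intro x hx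
        have := expMulDeriv (K := K) (E := u) (hua x ⟨hx.1, lt_of_le_of_lt hx.2.le hc.2⟩)
        convert this using 1 <;> ring_nf
      · intro x hx
        have h1 := hback x (Ioo_subset_Icc_self hx)
        have he := (Real.exp_pos (K * x)).le
        exact mul_nonneg h1 he
    have h2 : u t * Real.exp (K * t) ≤ u c * Real.exp (K * c) :=
      hmono ⟨ht.1, htc⟩ ⟨le_trans ht.1 htc, le_rfl⟩ htc
    rw [huc, zero_mul] at h2
    have h3 := hupos t ht
    nlinarith [Real.exp_pos (K * t)]

/-- Wronskian comparison: if `v > 0` between consecutive interior zeros `c₀ < c₁`, then any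
nonnegative supersolution `u` vanishes at `c₀`. -/
lemma wronskian_zero (a b : ℝ) (κ : ℝ → ℝ) (hκ : ContinuousOn κ (Icc a b))
    (v v₁ v₂ : ℝ → ℝ) (hv : SturmSol κ v v₁ v₂ (Icc a b))
    (hvne : ¬ ∀ t ∈ Icc a b, v t = 0)
    (c₀ c₁ : ℝ) (hc₀ : c₀ ∈ Ioo a b) (hc₁ : c₁ ∈ Ioo a b) (hlt : c₀ < c₁)
    (h0 : v c₀ = 0) (h1 : v c₁ = 0) (hpos : ∀ t ∈ Ioo c₀ c₁, 0 < v t)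
    (u u₁ u₂ : ℝ → ℝ)
    (hu : ∀ t ∈ Icc a b, HasDerivWithinAt u (u₁ t) (Icc a b) t)
    (hu₁ : ∀ t ∈ Icc a b, HasDerivWithinAt u₁ (u₂ t) (Icc a b) t)
    (hupos : ∀ t ∈ Icc a b, 0 ≤ u t)
    (hineq : ∀ t ∈ Ioo a b, u₂ t + κ t * u t ≤ 0) :
    u c₀ = 0 := by
  obtain ⟨hd, hd1, hcont2, heq⟩ := hv
  have hc₀I : c₀ ∈ Icc a b := Ioo_subset_Icc_self hc₀
  have hc₁I : c₁ ∈ Icc a b := Ioo_subset_Icc_self hc₁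
  have hvc : ContinuousOn v (Icc a b) :=
    fun t ht => (hd t ht).differentiableWithinAt.continuousWithinAt
  have hv1c : ContinuousOn v₁ (Icc a b) :=
    fun t ht => (hd1 t ht).differentiableWithinAt.continuousWithinAt
  have huc : ContinuousOn u (Icc a b) :=
    fun t ht => (hu t ht).differentiableWithinAt.continuousWithinAt
  have hu1c : ContinuousOn u₁ (Icc a b) :=
    fun t ht => (hu₁ t ht).differentiableWithinAt.continuousWithinAt
  have hva : ∀ t ∈ Ioo a b, HasDerivAt v (v₁ t) t :=
    fun t ht => (hd t (Ioo_subset_Icc_self ht)).hasDerivAt (Icc_mem_nhds ht.1 ht.2)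
  have hv1a : ∀ t ∈ Ioo a b, HasDerivAt v₁ (v₂ t) t :=
    fun t ht => (hd1 t (Ioo_subset_Icc_self ht)).hasDerivAt (Icc_mem_nhds ht.1 ht.2)
  have hua : ∀ t ∈ Ioo a b, HasDerivAt u (u₁ t) t :=
    fun t ht => (hu t (Ioo_subset_Icc_self ht)).hasDerivAt (Icc_mem_nhds ht.1 ht.2)
  have hu1a : ∀ t ∈ Ioo a b, HasDerivAt u₁ (u₂ t) t :=
    fun t ht => (hu₁ t (Ioo_subset_Icc_self ht)).hasDerivAt (Icc_mem_nhds ht.1 ht.2)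
  have hs0 : 0 ≤ v₁ c₀ := by
    have hder : HasDerivWithinAt v (v₁ c₀) (Ioi c₀) c₀ := (hva c₀ hc₀).hasDerivWithinAt
    rw [hasDerivWithinAt_iff_tendsto_slope] at hder
    rw [show Ioi c₀ \ {c₀} = Ioi c₀ by simp] at hder
    refine ge_of_tendsto hder ?_
    filter_upwards [Ioo_mem_nhdsGT_of_mem (⟨le_rfl, hlt⟩ : c₀ ∈ Ico c₀ c₁)] with t htm
    rw [slope_def_field]
    have := hpos t htm
    rw [h0]
    have h4 : (0:ℝ) ≤ v t - 0 := by linarith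
    exact div_nonneg h4 (by linarith [htm.1])
  have hs1 : v₁ c₁ ≤ 0 := by
    have hder : HasDerivWithinAt v (v₁ c₁) (Iio c₁) c₁ := (hva c₁ hc₁).hasDerivWithinAt
    rw [hasDerivWithinAt_iff_tendsto_slope] at hder
    rw [show Iio c₁ \ {c₁} = Iio c₁ by simp] at hder
    refine le_of_tendsto hder ?_
    filter_upwards [Ioo_mem_nhdsLT_of_mem (⟨hlt, le_rfl⟩ : c₁ ∈ Ioc c₀ c₁)] with t htm
    rw [slope_def_field]
    have := hpos t htm
    rw [h1]
    exact div_nonpos_of_nonneg_of_nonpos (by linarith) (by linarith [htm.2])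
  have hs0ne : v₁ c₀ ≠ 0 := by
    intro h
    exact hvne (sturm_unique a b κ hκ v v₁ v₂ ⟨hd, hd1, hcont2, heq⟩ c₀ hc₀I h0 h)
  set W : ℝ → ℝ := fun t => u₁ t * v t - u t * v₁ t with hWdef
  have hW : ∀ s, W s = u₁ s * v s - u s * v₁ s := fun _ => rfl
  have hWanti : AntitoneOn W (Icc c₀ c₁) := by
    apply antiAux
      (f' := fun t => u₂ t * v t + u₁ t * v₁ t - (u₁ t * v₁ t + u t * v₂ t))
    · exact ((hu1c.mul hvc).sub (huc.mul hv1c)).mono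
        (Icc_subset_Icc hc₀I.1 hc₁I.2)
    · intro t ht
      have htab : t ∈ Ioo a b := ⟨lt_trans hc₀.1 ht.1, lt_trans ht.2 hc₁.2⟩
      exact ((hu1a t htab).mul (hva t htab)).sub ((hua t htab).mul (hv1a t htab))
    · intro t ht
      have htab : t ∈ Ioo a b := ⟨lt_trans hc₀.1 ht.1, lt_trans ht.2 hc₁.2⟩
      have hveq : v₂ t = -(κ t * v t) := by
        have := heq t (Ioo_subset_Icc_self htab); linarith
      have h5 : (u₂ t + κ t * u t) * v t ≤ 0 :=
        mul_nonpos_of_nonpos_of_nonneg (hineq t htab) (hpos t ht).le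
      rw [hveq]
      nlinarith [h5]
  have hW0 : W c₀ ≤ 0 := by
    rw [hW, h0]
    have := mul_nonneg (hupos c₀ hc₀I) hs0
    nlinarith
  have hW1 : 0 ≤ W c₁ := by
    rw [hW, h1]
    have := mul_nonpos_of_nonneg_of_nonpos (hupos c₁ hc₁I) hs1
    nlinarith
  have hWle : W c₁ ≤ W c₀ := hWanti ⟨le_rfl, hlt.le⟩ ⟨hlt.le, le_rfl⟩ hlt.le
  have hWc₀ : W c₀ = 0 := le_antisymm hW0 (le_trans hW1 hWle)
  have : u c₀ * v₁ c₀ = 0 := by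
    have := hW c₀
    rw [hWc₀, h0] at this
    nlinarith [this]
  rcases mul_eq_zero.mp this with h | h
  · exact h
  · exact absurd h hs0ne

lemma SturmSol.neg {κ v v₁ v₂ : ℝ → ℝ} {s : Set ℝ} (hv : SturmSol κ v v₁ v₂ s) :
    SturmSol κ (fun t => -v t) (fun t => -v₁ t) (fun t => -v₂ t) s := by
  obtain ⟨hd, hd1, hc, heq⟩ := hv
  refine ⟨fun t ht => (hd t ht).neg, fun t ht => (hd1 t ht).neg, hc.neg, fun t ht => ?_⟩
  have := heq t ht
  ring_nf
  linarith

/-- If some nontrivial solution of `v'' + κv = 0` has two distinct interior zeros, then every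
nonnegative `C²` supersolution `u` (with `u'' + κu ≤ 0` on the interior) vanishes identically. -/
theorem supersolution_vanishes
    (a b : ℝ) (hab : a < b)
    (κ : ℝ → ℝ) (hκ : ContinuousOn κ (Icc a b))
    (v v₁ v₂ : ℝ → ℝ)
    (hv : SturmSol κ v v₁ v₂ (Icc a b))
    (hvne : ¬ ∀ t ∈ Icc a b, v t = 0)
    (t₀ t₁ : ℝ) (ht₀ : t₀ ∈ Ioo a b) (ht₁ : t₁ ∈ Ioo a b) (hlt : t₀ < t₁)
    (hvt₀ : v t₀ = 0) (hvt₁ : v t₁ = 0) :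
    ∀ u u₁ u₂ : ℝ → ℝ,
      (∀ t ∈ Icc a b, HasDerivWithinAt u (u₁ t) (Icc a b) t) →
      (∀ t ∈ Icc a b, HasDerivWithinAt u₁ (u₂ t) (Icc a b) t) →
      ContinuousOn u₂ (Icc a b) →
      (∀ t ∈ Icc a b, 0 ≤ u t) →
      (∀ t ∈ Ioo a b, u₂ t + κ t * u t ≤ 0) →
      ∀ t ∈ Icc a b, u t = 0 := by
  intro u u₁ u₂ hu hu₁ hu₂ hupos hineq
  have hvc : ContinuousOn v (Icc a b) :=
    fun t ht => (hv.1 t ht).differentiableWithinAt.continuousWithinAt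
  -- bound on κ
  obtain ⟨C0, hC0⟩ := isCompact_Icc.exists_bound_of_continuousOn hκ
  have hC : ∀ t ∈ Icc a b, |κ t| ≤ max C0 0 :=
    fun t ht => le_trans (by simpa using hC0 t ht) (le_max_left _ _)
  -- find a point where v ≠ 0 between t₀ and t₁
  obtain ⟨s, hsm, hvs⟩ : ∃ s ∈ Ioo t₀ t₁, v s ≠ 0 := by
    by_contra h
    push_neg at h
    set m := (t₀ + t₁) / 2 with hm_def
    have hm : m ∈ Ioo t₀ t₁ := ⟨by simp only [hm_def]; linarith, by simp only [hm_def]; linarith⟩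
    have hmab : m ∈ Ioo a b := ⟨lt_trans ht₀.1 hm.1, lt_trans hm.2 ht₁.2⟩
    have hvam : HasDerivAt v (v₁ m) m :=
      (hv.1 m (Ioo_subset_Icc_self hmab)).hasDerivAt (Icc_mem_nhds hmab.1 hmab.2)
    have hev : v =ᶠ[nhds m] (fun _ => 0) := by
      filter_upwards [Ioo_mem_nhds hm.1 hm.2] with x hx
      exact h x hx
    have h0' : HasDerivAt (fun _ : ℝ => (0:ℝ)) (v₁ m) m := hvam.congr_of_eventuallyEq hev.symm
    have hv₁m : v₁ m = 0 := by
      have := h0'.unique (hasDerivAt_const m 0)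
      linarith
    exact hvne (sturm_unique a b κ hκ v v₁ v₂ hv m (Ioo_subset_Icc_self hmab) (h m hm) hv₁m)
  -- consecutive zeros around s
  set Z₀ : Set ℝ := {t | t ∈ Icc t₀ s ∧ v t = 0} with hZ₀def
  set Z₁ : Set ℝ := {t | t ∈ Icc s t₁ ∧ v t = 0} with hZ₁def
  have hsub₀ : Icc t₀ s ⊆ Icc a b :=
    Icc_subset_Icc ht₀.1.le (le_trans hsm.2.le ht₁.2.le)
  have hsub₁ : Icc s t₁ ⊆ Icc a b :=
    Icc_subset_Icc (le_trans ht₀.1.le hsm.1.le) ht₁.2.le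
  have hZ₀closed : IsClosed Z₀ := by
    have : Z₀ = Icc t₀ s ∩ v ⁻¹' {0} := by
      ext t; simp [hZ₀def, and_comm]
    rw [this]
    exact (hvc.mono hsub₀).preimage_isClosed_of_isClosed isClosed_Icc isClosed_singleton
  have hZ₁closed : IsClosed Z₁ := by
    have : Z₁ = Icc s t₁ ∩ v ⁻¹' {0} := by
      ext t; simp [hZ₁def, and_comm]
    rw [this]
    exact (hvc.mono hsub₁).preimage_isClosed_of_isClosed isClosed_Icc isClosed_singleton
  have hZ₀ne : Z₀.Nonempty := ⟨t₀, ⟨le_rfl, hsm.1.le⟩, hvt₀⟩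
  have hZ₁ne : Z₁.Nonempty := ⟨t₁, ⟨hsm.2.le, le_rfl⟩, hvt₁⟩
  have hZ₀bdd : BddAbove Z₀ := ⟨s, fun t ht => ht.1.2⟩
  have hZ₁bdd : BddBelow Z₁ := ⟨s, fun t ht => ht.1.1⟩
  set c₀ : ℝ := sSup Z₀ with hc₀def
  set c₁ : ℝ := sInf Z₁ with hc₁def
  have hc₀mem : c₀ ∈ Z₀ := hZ₀closed.csSup_mem hZ₀ne hZ₀bdd
  have hc₁mem : c₁ ∈ Z₁ := hZ₁closed.csInf_mem hZ₁ne hZ₁bdd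
  have hvc₀ : v c₀ = 0 := hc₀mem.2
  have hvc₁ : v c₁ = 0 := hc₁mem.2
  have hc₀s : c₀ < s := lt_of_le_of_ne hc₀mem.1.2 (fun h => hvs (h ▸ hvc₀))
  have hsc₁ : s < c₁ := lt_of_le_of_ne hc₁mem.1.1 (fun h => hvs (h ▸ hvc₁))
  have hc₀ab : c₀ ∈ Ioo a b :=
    ⟨lt_of_lt_of_le ht₀.1 hc₀mem.1.1, lt_trans (lt_trans hc₀s hsm.2) ht₁.2⟩
  have hc₁ab : c₁ ∈ Ioo a b :=
    ⟨lt_trans (lt_trans ht₀.1 hsm.1) hsc₁, lt_of_le_of_lt hc₁mem.1.2 ht₁.2⟩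
  have hc₀c₁ : c₀ < c₁ := lt_trans hc₀s hsc₁
  -- v doesn't vanish on (c₀, c₁)
  have hnz : ∀ t ∈ Ioo c₀ c₁, v t ≠ 0 := by
    intro t ht hvt
    rcases le_total t s with hts | hst
    · have htZ : t ∈ Z₀ :=
        ⟨⟨le_trans hc₀mem.1.1 ht.1.le, hts⟩, hvt⟩
      exact absurd (le_csSup hZ₀bdd htZ) (not_le.mpr ht.1)
    · have htZ : t ∈ Z₁ :=
        ⟨⟨hst, le_trans ht.2.le hc₁mem.1.2⟩, hvt⟩
      exact absurd (csInf_le hZ₁bdd htZ) (not_le.mpr ht.2)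
  have hsmem : s ∈ Ioo c₀ c₁ := ⟨hc₀s, hsc₁⟩
  have hIoosub : Ioo c₀ c₁ ⊆ Icc a b :=
    fun t ht => ⟨le_of_lt (lt_trans hc₀ab.1 ht.1), le_of_lt (lt_trans ht.2 hc₁ab.2)⟩
  -- constant sign via IVT
  have hsign : (∀ t ∈ Ioo c₀ c₁, 0 < v t) ∨ (∀ t ∈ Ioo c₀ c₁, v t < 0) := by
    rcases lt_or_gt_of_ne hvs.symm with hpos | hneg
    · left
      intro t ht
      rcases lt_trichotomy (v t) 0 with hvt | hvt | hvt
      · exfalso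
        have hIVT := intermediate_value_uIcc
          (hvc.mono (((ordConnected_Ioo (a := c₀) (b := c₁)).uIcc_subset ht hsmem).trans hIoosub))
        have h0mem : (0:ℝ) ∈ uIcc (v t) (v s) := by
          rw [mem_uIcc]; left; exact ⟨hvt.le, hpos.le⟩
        obtain ⟨r, hr, hvr⟩ := hIVT h0mem
        exact hnz r ((ordConnected_Ioo (a := c₀) (b := c₁)).uIcc_subset ht hsmem hr) hvr
      · exact absurd hvt (hnz t ht)
      · exact hvt
    · right
      intro t ht
      rcases lt_trichotomy (v t) 0 with hvt | hvt | hvt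
      · exact hvt
      · exact absurd hvt (hnz t ht)
      · exfalso
        have hIVT := intermediate_value_uIcc
          (hvc.mono (((ordConnected_Ioo (a := c₀) (b := c₁)).uIcc_subset ht hsmem).trans hIoosub))
        have h0mem : (0:ℝ) ∈ uIcc (v t) (v s) := by
          rw [mem_uIcc]; right; exact ⟨hneg.le, hvt.le⟩
        obtain ⟨r, hr, hvr⟩ := hIVT h0mem
        exact hnz r ((ordConnected_Ioo (a := c₀) (b := c₁)).uIcc_subset ht hsmem hr) hvr
  -- u vanishes at c₀
  have huc₀ : u c₀ = 0 := by
    rcases hsign with hp | hn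
    · exact wronskian_zero a b κ hκ v v₁ v₂ hv hvne c₀ c₁ hc₀ab hc₁ab hc₀c₁
        hvc₀ hvc₁ hp u u₁ u₂ hu hu₁ hupos hineq
    · refine wronskian_zero a b κ hκ (fun t => -v t) (fun t => -v₁ t) (fun t => -v₂ t)
        hv.neg ?_ c₀ c₁ hc₀ab hc₁ab hc₀c₁ (by simp [hvc₀]) (by simp [hvc₁])
        (fun t ht => neg_pos.mpr (hn t ht)) u u₁ u₂ hu hu₁ hupos hineq
      intro h
      apply hvne
      intro t ht
      have h2 : -v t = 0 := h t ht
      linarith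
  exact spread_zero a b κ (max C0 0) hC (le_max_right _ _) u u₁ u₂ hu hu₁ hupos hineq
    c₀ hc₀ab huc₀
end

section
/- Let θ > 0 and let κ : [0,θ] → ℝ be continuous. Let u be the solution of u'' + κu = 0 on [0,θ] with u(0) = 0, u'(0) = 1, and let v be the solution of v'' + κ⁻v = 0 on [0,θ] with v(0) = 0, v'(0) = 1, where κ⁻(t) = κ(θ−t). Then u has a zero in (0,θ] if and only if v has a zero in (0,θ]. -/
open Set Topology Filter

theorem sturm_aux_dir (θ : ℝ) (hθ : 0 < θ) (κ : ℝ → ℝ)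
    (u u₁ u₂ v v₁ v₂ : ℝ → ℝ)
    (hu : SturmSol κ u u₁ u₂ (Icc 0 θ))
    (hu0 : u 0 = 0) (hu'0 : u₁ 0 = 1)
    (hv : SturmSol (fun t => κ (θ - t)) v v₁ v₂ (Icc 0 θ))
    (hv0 : v 0 = 0) (hv'0 : v₁ 0 = 1)
    (h : ∃ t ∈ Ioc 0 θ, u t = 0) : ∃ t ∈ Ioc 0 θ, v t = 0 := by
  obtain ⟨hud, hud', _, hueq⟩ := hu
  obtain ⟨hvd, hvd', _, hveq⟩ := hv
  by_contra hcon
  push_neg at hcon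
  set w : ℝ → ℝ := fun t => u (θ - t) with hw
  set w₁ : ℝ → ℝ := fun t => -(u₁ (θ - t)) with hw₁
  have hmem : ∀ t ∈ Icc (0:ℝ) θ, θ - t ∈ Icc (0:ℝ) θ := fun t ht =>
    ⟨by linarith [ht.2], by linarith [ht.1]⟩
  have hmaps : MapsTo (fun t => θ - t) (Icc (0:ℝ) θ) (Icc 0 θ) := hmem
  have hneg : ∀ t : ℝ, HasDerivWithinAt (fun s => θ - s) (-1 : ℝ) (Icc 0 θ) t := fun t =>
    ((hasDerivAt_id t).const_sub θ).hasDerivWithinAt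
  have hwd : ∀ t ∈ Icc (0:ℝ) θ, HasDerivWithinAt w (w₁ t) (Icc 0 θ) t := by
    intro t ht
    have := HasDerivWithinAt.comp t (hud _ (hmem t ht)) (hneg t) hmaps
    simpa [hw, hw₁, Function.comp_def, mul_neg_one] using this
  have hwd' : ∀ t ∈ Icc (0:ℝ) θ, HasDerivWithinAt w₁ (u₂ (θ - t)) (Icc 0 θ) t := by
    intro t ht
    have := (HasDerivWithinAt.comp t (hud' _ (hmem t ht)) (hneg t) hmaps).neg
    simpa [hw₁, Function.comp_def, mul_neg_one, Pi.neg_def] using this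
  set W : ℝ → ℝ := fun t => v t * w₁ t - v₁ t * w t with hW
  have hWd : ∀ t ∈ Icc (0:ℝ) θ, HasDerivWithinAt W 0 (Icc 0 θ) t := by
    intro t ht
    have h1 := ((hvd t ht).mul (hwd' t ht)).sub ((hvd' t ht).mul (hwd t ht))
    refine h1.congr_deriv ?_
    have e1 := hueq (θ - t) (hmem t ht)
    have e2 := hveq t ht
    simp only [hw, hw₁] at *
    linear_combination (v t) * e1 - (u (θ - t)) * e2
  have hWc : ContinuousOn W (Icc 0 θ) := fun t ht =>
    (((hvd t ht).continuousWithinAt.mul ((hwd' t ht).continuousWithinAt)).sub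
      (((hvd' t ht).continuousWithinAt).mul ((hwd t ht).continuousWithinAt)))
  have hWval : ∀ x ∈ Icc (0:ℝ) θ, W x = W 0 :=
    constant_of_has_deriv_right_zero hWc (fun x hx =>
      (hWd x (Ico_subset_Icc_self hx)).mono_of_mem_nhdsWithin (Icc_mem_nhdsGE_of_mem hx))
  have hW0 : W 0 = -(u θ) := by simp [hW, hw, hw₁, hv0, hv'0]
  have hWθ : W θ = -(v θ) := by simp [hW, hw, hw₁, hu0, hu'0]
  have huv : u θ = v θ := by
    have := hWval θ ⟨hθ.le, le_rfl⟩
    rw [hWθ, hW0] at this; linarith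
  -- v is positive on (0, θ]
  have hvcont : ContinuousOn v (Icc 0 θ) := fun t ht => (hvd t ht).continuousWithinAt
  have hv1 : HasDerivWithinAt v 1 (Icc 0 θ) 0 := hv'0 ▸ hvd 0 ⟨le_rfl, hθ.le⟩
  have hsub : Ioc (0:ℝ) θ ⊆ Icc 0 θ \ {0} := fun x hx => ⟨⟨hx.1.le, hx.2⟩, hx.1.ne'⟩
  haveI : (𝓝[Ioc (0:ℝ) θ] 0).NeBot := by
    refine mem_closure_iff_nhdsWithin_neBot.mp ?_
    rw [closure_Ioc hθ.ne]
    exact ⟨le_rfl, hθ.le⟩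
  have hev : ∀ᶠ t in 𝓝[Ioc (0:ℝ) θ] 0, 0 < slope v 0 t :=
    (((hasDerivWithinAt_iff_tendsto_slope.mp hv1).mono_left
      (nhdsWithin_mono 0 hsub)).eventually (eventually_gt_nhds one_pos))
  obtain ⟨s, hsl, hsmem⟩ := (hev.and eventually_mem_nhdsWithin).exists
  have hvs : 0 < v s := by
    have h1 : slope v 0 s = v s / s := by
      rw [slope_def_field, hv0, sub_zero, sub_zero]
    rw [h1] at hsl
    have := mul_pos hsl hsmem.1
    rwa [div_mul_cancel₀ _ hsmem.1.ne'] at this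
  have hvpos : ∀ t ∈ Ioc (0:ℝ) θ, 0 < v t := by
    intro t ht
    rcases lt_trichotomy (v t) 0 with hlt | heq | hgt
    · exfalso
      have hsubI : uIcc s t ⊆ Ioc 0 θ := by
        intro x hx
        rw [mem_uIcc] at hx
        rcases hx with ⟨h1, h2⟩ | ⟨h1, h2⟩
        · exact ⟨lt_of_lt_of_le hsmem.1 h1, le_trans h2 ht.2⟩
        · exact ⟨lt_of_lt_of_le ht.1 h1, le_trans h2 hsmem.2⟩
      have hcont : ContinuousOn v (uIcc s t) :=
        hvcont.mono (fun x hx => Ioc_subset_Icc_self (hsubI hx))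
      have h0mem : (0:ℝ) ∈ uIcc (v s) (v t) := by
        rw [mem_uIcc]; right; exact ⟨hlt.le, hvs.le⟩
      obtain ⟨c, hc, hc0⟩ := intermediate_value_uIcc hcont h0mem
      exact hcon c (hsubI hc) hc0
    · exact absurd heq (hcon t ht)
    · exact hgt
  obtain ⟨t₀, ht₀, hut₀⟩ := h
  rcases eq_or_lt_of_le ht₀.2 with heq | hlt
  · have : v θ = 0 := by rw [← huv, ← heq]; exact hut₀
    exact (hvpos θ ⟨hθ, le_rfl⟩).ne' this
  · set a := θ - t₀ with ha
    have ha0 : 0 < a := by simp [ha]; linarith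
    have haθ : a < θ := by simp [ha]; linarith [ht₀.1]
    have hsubIoc : Icc a θ ⊆ Ioc 0 θ := fun x hx => ⟨lt_of_lt_of_le ha0 hx.1, hx.2⟩
    have hsubIcc : Icc a θ ⊆ Icc 0 θ := fun x hx => Ioc_subset_Icc_self (hsubIoc hx)
    have hvne : ∀ x ∈ Icc a θ, v x ≠ 0 := fun x hx => (hvpos x (hsubIoc hx)).ne'
    have hwcont : ContinuousOn w (Icc 0 θ) := fun t ht => (hwd t ht).continuousWithinAt
    have hcont_h : ContinuousOn (fun t => w t / v t) (Icc a θ) :=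
      (hwcont.mono hsubIcc).div (hvcont.mono hsubIcc) hvne
    have hvθ : 0 < v θ := hvpos θ ⟨hθ, le_rfl⟩
    have hderiv : ∀ x ∈ interior (Icc a θ), deriv (fun t => w t / v t) x < 0 := by
      intro x hx
      rw [interior_Icc] at hx
      have hx0 : 0 < x := lt_trans ha0 hx.1
      have hxθ : x < θ := hx.2
      have hxI : x ∈ Icc (0:ℝ) θ := ⟨hx0.le, hxθ.le⟩
      have hwnd : HasDerivAt w (w₁ x) x := (hwd x hxI).hasDerivAt (Icc_mem_nhds hx0 hxθ)
      have hvnd : HasDerivAt v (v₁ x) x := (hvd x hxI).hasDerivAt (Icc_mem_nhds hx0 hxθ)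
      have hvx : 0 < v x := hvpos x ⟨hx0, hxθ.le⟩
      have hdiv := hwnd.fun_div hvnd hvx.ne'
      rw [hdiv.deriv]
      have hWx := hWval x hxI
      rw [hW0, huv] at hWx
      have hnum : w₁ x * v x - w x * v₁ x = -(v θ) := by
        simp only [hW] at hWx; linarith
      rw [hnum]
      exact div_neg_of_neg_of_pos (neg_neg_iff_pos.mpr hvθ) (pow_pos hvx 2)
    have hanti := strictAntiOn_of_deriv_neg (convex_Icc a θ) hcont_h hderiv
    have hkey := hanti ⟨le_rfl, haθ.le⟩ ⟨haθ.le, le_rfl⟩ haθ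
    have hha : w a / v a = 0 := by
      have : w a = 0 := by simp [hw, ha, hut₀]
      rw [this, zero_div]
    have hhθ : w θ / v θ = 0 := by
      have : w θ = 0 := by simp [hw, hu0]
      rw [this, zero_div]
    simp only [hha, hhθ] at hkey
    exact lt_irrefl 0 hkey


/-- The normalized solution for `κ` has a zero in `(0,θ]` iff the normalized solution for the
time-reversed coefficient `κ⁻(t) = κ(θ−t)` has a zero in `(0,θ]`. -/
theorem zero_iff_reversed_zero
    (θ : ℝ) (hθ : 0 < θ)
    (κ : ℝ → ℝ) (hκ : ContinuousOn κ (Icc 0 θ))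
    (u u₁ u₂ v v₁ v₂ : ℝ → ℝ)
    (hu : SturmSol κ u u₁ u₂ (Icc 0 θ))
    (hu0 : u 0 = 0) (hu'0 : u₁ 0 = 1)
    (hv : SturmSol (fun t => κ (θ - t)) v v₁ v₂ (Icc 0 θ))
    (hv0 : v 0 = 0) (hv'0 : v₁ 0 = 1) :
    (∃ t ∈ Ioc 0 θ, u t = 0) ↔ (∃ t ∈ Ioc 0 θ, v t = 0) := by
  constructor
  · exact sturm_aux_dir θ hθ κ u u₁ u₂ v v₁ v₂ hu hu0 hu'0 hv hv0 hv'0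
  · intro h
    have hu' : SturmSol (fun t => (fun s => κ (θ - s)) (θ - t)) u u₁ u₂ (Icc 0 θ) :=
      ⟨hu.1, hu.2.1, hu.2.2.1, fun t ht => by simpa using hu.2.2.2 t ht⟩
    exact sturm_aux_dir θ hθ (fun t => κ (θ - t)) v v₁ v₂ u u₁ u₂ hv hv0 hv'0
      hu' hu0 hu'0 h
end

section
/- Let κ, κ' : [0,1] → ℝ be continuous and let λ ∈ [0,1]. Let f, g, h : [0,1] → ℝ be solutions on [0,1] of f'' + κf = 0, g'' + κ'g = 0 and h'' + ((1−λ)κ + λκ')h = 0 respectively, each with value 0 at 0 and value 1 at 1, and each positive on (0,1]. Then f(t)^{1−λ}·g(t)^{λ} ≥ h(t) for all t ∈ [0,1]. (Log-convexity of the distortion coefficients σ_κ^{(t)} in the coefficient κ.) -/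
open Set

open Filter Topology

/-- slope limit at 0 -/
lemma dlc_slope_tendsto (u : ℝ → ℝ) (d : ℝ) (hd : HasDerivWithinAt u d (Icc 0 1) 0)
    (hu0 : u 0 = 0) : Tendsto (fun t => u t / t) (𝓝[Ioc 0 1] 0) (𝓝 d) := by
  have h1 : Tendsto (slope u 0) (𝓝[Icc 0 1 \ {0}] 0) (𝓝 d) := by
    rw [hasDerivWithinAt_iff_tendsto_slope] at hd
    simpa using hd
  have h2 : Tendsto (slope u 0) (𝓝[Ioc 0 1] 0) (𝓝 d) :=
    h1.mono_left (nhdsWithin_mono _ (fun t ht => ⟨Ioc_subset_Icc_self ht, ne_of_gt ht.1⟩))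
  refine h2.congr' ?_
  filter_upwards [self_mem_nhdsWithin] with t ht
  simp [slope, hu0, div_eq_inv_mul]

/-- positivity of the derivative at 0 -/
lemma dlc_deriv_pos (κ u u' u'' : ℝ → ℝ) (hκ : ContinuousOn κ (Icc 0 1))
    (hu : SturmSol κ u u' u'' (Icc 0 1)) (hu0 : u 0 = 0) (hu1 : u 1 = 1)
    (hupos : ∀ t ∈ Ioc (0:ℝ) 1, 0 < u t) : 0 < u' 0 := by
  obtain ⟨hd, hd', _, hode⟩ := hu
  have h01 : (0:ℝ) ∈ Icc (0:ℝ) 1 := ⟨le_refl _, zero_le_one⟩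
  haveI : (𝓝[Ioc (0:ℝ) 1] 0).NeBot := left_nhdsWithin_Ioc_neBot one_pos
  have hslope := dlc_slope_tendsto u (u' 0) (hd 0 h01) hu0
  have hnonneg : 0 ≤ u' 0 := by
    refine ge_of_tendsto hslope ?_
    filter_upwards [self_mem_nhdsWithin] with t ht
    exact div_nonneg (le_of_lt (hupos t ht)) (le_of_lt ht.1)
  rcases lt_or_eq_of_le hnonneg with hpos | heq
  · exact hpos
  -- now u' 0 = 0; derive contradiction via Gronwall uniqueness
  exfalso
  obtain ⟨C, hC⟩ := isCompact_Icc.exists_bound_of_continuousOn hκ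
  set π : ℝ → ℝ := fun t => max 0 (min 1 t) with hπdef
  have hπ : ∀ t, π t ∈ Icc (0:ℝ) 1 := fun t =>
    ⟨le_max_left _ _, max_le zero_le_one (min_le_left _ _)⟩
  have hπeq : ∀ t ∈ Icc (0:ℝ) 1, π t = t := fun t ht => by
    simp [hπdef, min_eq_right ht.2, max_eq_right ht.1]
  set v : ℝ → ℝ × ℝ → ℝ × ℝ := fun t p => (p.2, -(κ (π t)) * p.1) with hvdef
  set K : NNReal := ⟨max 1 C, le_max_of_le_left zero_le_one⟩ with hKdef
  have hKc : (K : ℝ) = max 1 C := rfl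
  have hv : ∀ t, LipschitzOnWith K (v t) (univ : Set (ℝ × ℝ)) := by
    intro t
    apply LipschitzWith.lipschitzOnWith
    apply LipschitzWith.of_dist_le_mul
    intro p q
    have hκb : |κ (π t)| ≤ max 1 C :=
      le_max_of_le_right (by simpa [Real.norm_eq_abs] using hC _ (hπ t))
    have hd0 : (0:ℝ) ≤ max |p.1 - q.1| |p.2 - q.2| :=
      le_max_of_le_left (abs_nonneg _)
    simp only [Prod.dist_eq, Real.dist_eq, hvdef, hKc]
    apply max_le
    · exact le_trans (le_max_right |p.1 - q.1| _)
        (le_mul_of_one_le_left hd0 (le_max_left _ _))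
    · have h3 : (-(κ (π t)) * p.1) - (-(κ (π t)) * q.1) = κ (π t) * (q.1 - p.1) := by ring
      rw [h3, abs_mul, abs_sub_comm q.1 p.1]
      exact mul_le_mul hκb (le_max_left _ _) (abs_nonneg _)
        (le_trans (abs_nonneg _) hκb)
  have key : EqOn (fun t => (u t, u' t)) (fun _ => ((0:ℝ), (0:ℝ))) (Icc 0 1) := by
    apply ODE_solution_unique_of_mem_Icc_right (s := fun _ => (univ : Set (ℝ × ℝ))) (fun t _ => hv t)
    · exact ContinuousOn.prodMk (fun t ht => (hd t ht).continuousWithinAt)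
        (fun t ht => (hd' t ht).continuousWithinAt)
    · intro t ht
      have htI : t ∈ Icc (0:ℝ) 1 := Ico_subset_Icc_self ht
      have hmem : Icc (0:ℝ) 1 ∈ 𝓝[Ici t] t := by
        refine mem_nhdsWithin.mpr ⟨Iio 1, isOpen_Iio, ht.2, ?_⟩
        rintro s ⟨hs1, hs2⟩
        exact ⟨le_trans ht.1 hs2, le_of_lt hs1⟩
      have h1 := (hd t htI).mono_of_mem_nhdsWithin hmem
      have h2 := (hd' t htI).mono_of_mem_nhdsWithin hmem
      have hval : v t (u t, u' t) = (u' t, u'' t) := by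
        have := hode t htI
        simp only [hvdef, hπeq t htI]
        exact Prod.ext rfl (by dsimp; linarith)
      rw [hval]
      exact h1.prodMk h2
    · exact fun t _ => mem_univ _
    · exact continuousOn_const
    · intro t ht
      have : v t ((0:ℝ), (0:ℝ)) = ((0:ℝ), (0:ℝ)) := by simp [hvdef]
      rw [this]
      exact hasDerivWithinAt_const _ _ _
    · exact fun t _ => mem_univ _
    · exact Prod.ext hu0 heq.symm
  have := key ⟨zero_le_one, le_refl 1⟩
  rw [Prod.ext_iff] at this
  simp only at this
  rw [hu1] at this
  exact one_ne_zero this.1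

/-- Log-convexity of the distortion coefficients `σ_κ^{(t)}` in the coefficient `κ`. -/
theorem distortion_log_convex
    (κ κ' : ℝ → ℝ)
    (hκ : ContinuousOn κ (Icc 0 1)) (hκ' : ContinuousOn κ' (Icc 0 1))
    (lam : ℝ) (hlam : lam ∈ Icc (0:ℝ) 1)
    (f f₁ f₂ g g₁ g₂ h h₁ h₂ : ℝ → ℝ)
    (hf : SturmSol κ f f₁ f₂ (Icc 0 1))
    (hg : SturmSol κ' g g₁ g₂ (Icc 0 1))
    (hh : SturmSol (fun t => (1 - lam) * κ t + lam * κ' t) h h₁ h₂ (Icc 0 1))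
    (hf0 : f 0 = 0) (hf1 : f 1 = 1) (hfpos : ∀ t ∈ Ioc (0:ℝ) 1, 0 < f t)
    (hg0 : g 0 = 0) (hg1 : g 1 = 1) (hgpos : ∀ t ∈ Ioc (0:ℝ) 1, 0 < g t)
    (hh0 : h 0 = 0) (hh1 : h 1 = 1) (hhpos : ∀ t ∈ Ioc (0:ℝ) 1, 0 < h t) :
    ∀ t ∈ Icc (0:ℝ) 1, h t ≤ f t ^ (1 - lam) * g t ^ lam := by
  have ha0 : 0 < f₁ 0 := dlc_deriv_pos κ f f₁ f₂ hκ hf hf0 hf1 hfpos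
  have hb0 : 0 < g₁ 0 := dlc_deriv_pos κ' g g₁ g₂ hκ' hg hg0 hg1 hgpos
  obtain ⟨hfd, hfd', hf2c, hfode⟩ := hf
  obtain ⟨hgd, hgd', hg2c, hgode⟩ := hg
  obtain ⟨hhd, hhd', hh2c, hhode⟩ := hh
  obtain ⟨hlam0, hlam1⟩ := hlam
  have hIoc : Ioc (0:ℝ) 1 ⊆ Icc 0 1 := Ioc_subset_Icc_self
  have hIoo : Ioo (0:ℝ) 1 ⊆ Icc 0 1 := Ioo_subset_Icc_self
  have hIooIoc : Ioo (0:ℝ) 1 ⊆ Ioc 0 1 := Ioo_subset_Ioc_self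
  have h01 : (0:ℝ) ∈ Icc (0:ℝ) 1 := ⟨le_refl _, zero_le_one⟩
  -- continuity
  have hfc : ContinuousOn f (Icc 0 1) := fun t ht => (hfd t ht).continuousWithinAt
  have hf1c : ContinuousOn f₁ (Icc 0 1) := fun t ht => (hfd' t ht).continuousWithinAt
  have hgc : ContinuousOn g (Icc 0 1) := fun t ht => (hgd t ht).continuousWithinAt
  have hg1c : ContinuousOn g₁ (Icc 0 1) := fun t ht => (hgd' t ht).continuousWithinAt
  have hhc : ContinuousOn h (Icc 0 1) := fun t ht => (hhd t ht).continuousWithinAt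
  have hh1c : ContinuousOn h₁ (Icc 0 1) := fun t ht => (hhd' t ht).continuousWithinAt
  -- interior derivatives
  have Hf : ∀ t ∈ Ioo (0:ℝ) 1, HasDerivAt f (f₁ t) t := fun t ht =>
    (hfd t (hIoo ht)).hasDerivAt (Icc_mem_nhds ht.1 ht.2)
  have Hf1 : ∀ t ∈ Ioo (0:ℝ) 1, HasDerivAt f₁ (f₂ t) t := fun t ht =>
    (hfd' t (hIoo ht)).hasDerivAt (Icc_mem_nhds ht.1 ht.2)
  have Hg : ∀ t ∈ Ioo (0:ℝ) 1, HasDerivAt g (g₁ t) t := fun t ht =>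
    (hgd t (hIoo ht)).hasDerivAt (Icc_mem_nhds ht.1 ht.2)
  have Hg1 : ∀ t ∈ Ioo (0:ℝ) 1, HasDerivAt g₁ (g₂ t) t := fun t ht =>
    (hgd' t (hIoo ht)).hasDerivAt (Icc_mem_nhds ht.1 ht.2)
  have Hh : ∀ t ∈ Ioo (0:ℝ) 1, HasDerivAt h (h₁ t) t := fun t ht =>
    (hhd t (hIoo ht)).hasDerivAt (Icc_mem_nhds ht.1 ht.2)
  have Hh1 : ∀ t ∈ Ioo (0:ℝ) 1, HasDerivAt h₁ (h₂ t) t := fun t ht =>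
    (hhd' t (hIoo ht)).hasDerivAt (Icc_mem_nhds ht.1 ht.2)
  set E : ℝ → ℝ := fun t => Real.exp ((1 - lam) * Real.log (f t) + lam * Real.log (g t))
    with hEdef
  set m : ℝ → ℝ := fun t => (1 - lam) * (f₁ t / f t) + lam * (g₁ t / g t) with hmdef
  set W : ℝ → ℝ := fun t => E t * (m t * h t - h₁ t) with hWdef
  have hEpos : ∀ t, 0 < E t := fun t => Real.exp_pos _
  have hEd : ∀ t ∈ Ioo (0:ℝ) 1, HasDerivAt E (E t * m t) t := by
    intro t ht
    have hft := hfpos t (hIooIoc ht)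
    have hgt := hgpos t (hIooIoc ht)
    have h1 := ((Hf t ht).log hft.ne').const_mul (1 - lam)
    have h2 := ((Hg t ht).log hgt.ne').const_mul lam
    have hL := h1.add h2
    have := hL.exp
    simpa [hEdef, hmdef] using this
  have hWd : ∀ t ∈ Ioo (0:ℝ) 1,
      HasDerivAt W (-(E t * (lam * (1 - lam) * (f₁ t / f t - g₁ t / g t) ^ 2 * h t))) t := by
    intro t ht
    have hft := hfpos t (hIooIoc ht)
    have hgt := hgpos t (hIooIoc ht)
    have hmd : HasDerivAt m ((1 - lam) * ((f₂ t * f t - f₁ t * f₁ t) / f t ^ 2)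
        + lam * ((g₂ t * g t - g₁ t * g₁ t) / g t ^ 2)) t := by
      have h1 := ((Hf1 t ht).div (Hf t ht) hft.ne').const_mul (1 - lam)
      have h2 := ((Hg1 t ht).div (Hg t ht) hgt.ne').const_mul lam
      simpa [hmdef] using h1.fun_add h2
    have hWd0 := (hEd t ht).fun_mul ((hmd.fun_mul (Hh t ht)).fun_sub (Hh1 t ht))
    rw [hWdef]
    refine hWd0.congr_deriv ?_
    have e2 : f₂ t = -(κ t * f t) := by have := hfode t (hIoo ht); linarith
    have e3 : g₂ t = -(κ' t * g t) := by have := hgode t (hIoo ht); linarith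
    have e4 : h₂ t = -(((1 - lam) * κ t + lam * κ' t) * h t) := by
      have := hhode t (hIoo ht); simp only at this; linarith
    rw [e2, e3, e4]
    simp only [hmdef]
    field_simp
    ring
  -- antitonicity of W
  have hfne : ∀ t ∈ Ioc (0:ℝ) 1, f t ≠ 0 := fun t ht => (hfpos t ht).ne'
  have hgne : ∀ t ∈ Ioc (0:ℝ) 1, g t ≠ 0 := fun t ht => (hgpos t ht).ne'
  have hhne : ∀ t ∈ Ioc (0:ℝ) 1, h t ≠ 0 := fun t ht => (hhpos t ht).ne'
  have hEc : ContinuousOn E (Ioc 0 1) := by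
    apply Real.continuous_exp.comp_continuousOn
    exact (continuousOn_const.mul ((hfc.mono hIoc).log hfne)).add
      (continuousOn_const.mul ((hgc.mono hIoc).log hgne))
  have hmc : ContinuousOn m (Ioc 0 1) :=
    (continuousOn_const.mul ((hf1c.mono hIoc).div (hfc.mono hIoc) hfne)).add
      (continuousOn_const.mul ((hg1c.mono hIoc).div (hgc.mono hIoc) hgne))
  have hWc : ContinuousOn W (Ioc 0 1) :=
    hEc.mul ((hmc.mul (hhc.mono hIoc)).sub (hh1c.mono hIoc))
  have hWanti : AntitoneOn W (Ioc 0 1) := by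
    apply antitoneOn_of_deriv_nonpos (convex_Ioc 0 1) hWc
    · rw [interior_Ioc]
      exact fun t ht => (hWd t ht).differentiableAt.differentiableWithinAt
    · rw [interior_Ioc]
      intro t ht
      rw [(hWd t ht).deriv]
      have hht := hhpos t (hIooIoc ht)
      have hE := hEpos t
      have : 0 ≤ E t * (lam * (1 - lam) * (f₁ t / f t - g₁ t / g t) ^ 2 * h t) := by
        apply mul_nonneg (le_of_lt hE)
        apply mul_nonneg (mul_nonneg (mul_nonneg hlam0 (by linarith)) (sq_nonneg _))
        exact le_of_lt hht
      linarith
  -- limit of W at 0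
  haveI : (𝓝[Ioc (0:ℝ) 1] 0).NeBot := left_nhdsWithin_Ioc_neBot one_pos
  have hafl : Tendsto (fun t => f t / t) (𝓝[Ioc 0 1] 0) (𝓝 (f₁ 0)) :=
    dlc_slope_tendsto f (f₁ 0) (hfd 0 h01) hf0
  have hbgl : Tendsto (fun t => g t / t) (𝓝[Ioc 0 1] 0) (𝓝 (g₁ 0)) :=
    dlc_slope_tendsto g (g₁ 0) (hgd 0 h01) hg0
  have hgf : Tendsto (fun t => g t / f t) (𝓝[Ioc 0 1] 0) (𝓝 (g₁ 0 / f₁ 0)) := by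
    apply Filter.Tendsto.congr' _ (hbgl.div hafl ha0.ne')
    filter_upwards [self_mem_nhdsWithin] with t ht
    have htne : t ≠ 0 := ht.1.ne'
    simp only [Pi.div_apply]
    field_simp
  have hfg : Tendsto (fun t => f t / g t) (𝓝[Ioc 0 1] 0) (𝓝 (f₁ 0 / g₁ 0)) := by
    apply Filter.Tendsto.congr' _ (hafl.div hbgl hb0.ne')
    filter_upwards [self_mem_nhdsWithin] with t ht
    have htne : t ≠ 0 := ht.1.ne'
    simp only [Pi.div_apply]
    field_simp
  have hEf : Tendsto (fun t => E t / f t) (𝓝[Ioc 0 1] 0)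
      (𝓝 (Real.exp (lam * Real.log (g₁ 0 / f₁ 0)))) := by
    have hlog : Tendsto (fun t => Real.log (g t / f t)) (𝓝[Ioc 0 1] 0)
        (𝓝 (Real.log (g₁ 0 / f₁ 0))) :=
      ((Real.continuousAt_log (div_pos hb0 ha0).ne').tendsto).comp hgf
    have hexp := (Real.continuous_exp.continuousAt.tendsto).comp (hlog.const_mul lam)
    apply Filter.Tendsto.congr' _ hexp
    filter_upwards [self_mem_nhdsWithin] with t ht
    have hft := hfpos t ht
    have hgt := hgpos t ht
    show Real.exp (lam * Real.log (g t / f t)) = E t / f t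
    rw [Real.log_div hgt.ne' hft.ne', hEdef]
    conv_rhs => rw [show f t = Real.exp (Real.log (f t)) from (Real.exp_log hft).symm]
    rw [← Real.exp_sub]
    congr 1
    ring
  have hEg : Tendsto (fun t => E t / g t) (𝓝[Ioc 0 1] 0)
      (𝓝 (Real.exp ((1 - lam) * Real.log (f₁ 0 / g₁ 0)))) := by
    have hlog : Tendsto (fun t => Real.log (f t / g t)) (𝓝[Ioc 0 1] 0)
        (𝓝 (Real.log (f₁ 0 / g₁ 0))) :=
      ((Real.continuousAt_log (div_pos ha0 hb0).ne').tendsto).comp hfg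
    have hexp := (Real.continuous_exp.continuousAt.tendsto).comp (hlog.const_mul (1 - lam))
    apply Filter.Tendsto.congr' _ hexp
    filter_upwards [self_mem_nhdsWithin] with t ht
    have hft := hfpos t ht
    have hgt := hgpos t ht
    show Real.exp ((1 - lam) * Real.log (f t / g t)) = E t / g t
    rw [Real.log_div hft.ne' hgt.ne', hEdef]
    conv_rhs => rw [show g t = Real.exp (Real.log (g t)) from (Real.exp_log hgt).symm]
    rw [← Real.exp_sub]
    congr 1
    ring
  have hA : Tendsto (fun t => f₁ t * h t - f t * h₁ t) (𝓝[Ioc 0 1] 0) (𝓝 0) := by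
    have h1 : ContinuousWithinAt (fun t => f₁ t * h t - f t * h₁ t) (Icc 0 1) 0 :=
      ((hf1c 0 h01).mul (hhc 0 h01)).sub ((hfc 0 h01).mul (hh1c 0 h01))
    have h2 := h1.mono_left (nhdsWithin_mono _ hIoc)
    simpa [hf0, hh0] using h2
  have hB : Tendsto (fun t => g₁ t * h t - g t * h₁ t) (𝓝[Ioc 0 1] 0) (𝓝 0) := by
    have h1 : ContinuousWithinAt (fun t => g₁ t * h t - g t * h₁ t) (Icc 0 1) 0 :=
      ((hg1c 0 h01).mul (hhc 0 h01)).sub ((hgc 0 h01).mul (hh1c 0 h01))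
    have h2 := h1.mono_left (nhdsWithin_mono _ hIoc)
    simpa [hg0, hh0] using h2
  have hWlim : Tendsto W (𝓝[Ioc 0 1] 0) (𝓝 0) := by
    have hcomb := ((hEf.mul hA).const_mul (1 - lam)).add ((hEg.mul hB).const_mul lam)
    rw [show (1 - lam) * (Real.exp (lam * Real.log (g₁ 0 / f₁ 0)) * 0)
        + lam * (Real.exp ((1 - lam) * Real.log (f₁ 0 / g₁ 0)) * 0) = 0 by ring] at hcomb
    apply Filter.Tendsto.congr' _ hcomb
    filter_upwards [self_mem_nhdsWithin] with t ht
    have hft := hfpos t ht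
    have hgt := hgpos t ht
    show (1 - lam) * (E t / f t * (f₁ t * h t - f t * h₁ t))
        + lam * (E t / g t * (g₁ t * h t - g t * h₁ t)) = W t
    rw [hWdef, hmdef]
    field_simp
    ring
  have hWle : ∀ t ∈ Ioc (0:ℝ) 1, W t ≤ 0 := by
    intro t ht
    refine ge_of_tendsto hWlim ?_
    have h1 : Iio t ∈ 𝓝[Ioc (0:ℝ) 1] 0 := mem_nhdsWithin_of_mem_nhds (Iio_mem_nhds ht.1)
    filter_upwards [self_mem_nhdsWithin, h1] with s hs hst
    exact hWanti hs ht (le_of_lt hst)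
  -- monotone q
  set q : ℝ → ℝ := fun t =>
    Real.log (h t) - ((1 - lam) * Real.log (f t) + lam * Real.log (g t)) with hqdef
  have hqd : ∀ t ∈ Ioo (0:ℝ) 1, HasDerivAt q (h₁ t / h t - m t) t := by
    intro t ht
    have hht := hhpos t (hIooIoc ht)
    have hft := hfpos t (hIooIoc ht)
    have hgt := hgpos t (hIooIoc ht)
    have h1 := (Hh t ht).log hht.ne'
    have h2 := ((Hf t ht).log hft.ne').const_mul (1 - lam)
    have h3 := ((Hg t ht).log hgt.ne').const_mul lam
    simpa [hqdef, hmdef] using h1.fun_sub (h2.fun_add h3)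
  have hqc : ContinuousOn q (Ioc 0 1) :=
    ((hhc.mono hIoc).log hhne).sub ((continuousOn_const.mul ((hfc.mono hIoc).log hfne)).add
      (continuousOn_const.mul ((hgc.mono hIoc).log hgne)))
  have hqmono : MonotoneOn q (Ioc 0 1) := by
    apply monotoneOn_of_deriv_nonneg (convex_Ioc 0 1) hqc
    · rw [interior_Ioc]
      exact fun t ht => (hqd t ht).differentiableAt.differentiableWithinAt
    · rw [interior_Ioc]
      intro t ht
      rw [(hqd t ht).deriv]
      have hW0 := hWle t (hIooIoc ht)
      have hE := hEpos t
      have hht := hhpos t (hIooIoc ht)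
      have hmh : m t * h t - h₁ t ≤ 0 := by
        rw [hWdef] at hW0
        simp only at hW0
        by_contra hcon
        push_neg at hcon
        nlinarith
      rw [sub_nonneg]
      rw [le_div_iff₀ hht]
      linarith
  -- conclusion
  intro t ht
  rcases eq_or_lt_of_le ht.1 with heq0 | hpos
  · rw [← heq0, hf0, hg0, hh0]
    exact mul_nonneg (Real.rpow_nonneg (le_refl 0) _) (Real.rpow_nonneg (le_refl 0) _)
  · have htIoc : t ∈ Ioc (0:ℝ) 1 := ⟨hpos, ht.2⟩
    have h1Ioc : (1:ℝ) ∈ Ioc (0:ℝ) 1 := ⟨one_pos, le_refl _⟩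
    have hqle := hqmono htIoc h1Ioc ht.2
    have hq1 : q 1 = 0 := by rw [hqdef]; simp [hf1, hg1, hh1]
    rw [hq1] at hqle
    have hht := hhpos t htIoc
    have hft := hfpos t htIoc
    have hgt := hgpos t htIoc
    have hE : f t ^ (1 - lam) * g t ^ lam = E t := by
      rw [Real.rpow_def_of_pos hft, Real.rpow_def_of_pos hgt, ← Real.exp_add, hEdef]
      congr 1
      ring
    rw [hE]
    calc h t = Real.exp (Real.log (h t)) := (Real.exp_log hht).symm
      _ ≤ E t := by
          rw [hEdef]
          apply Real.exp_le_exp.mpr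
          rw [hqdef] at hqle
          simp only at hqle
          linarith
end

section
/- Let L > 0, let κ : [0,L] → ℝ be continuous, and fix t ∈ (0,1). There exists h₀ ∈ (0,L] such that for each h ∈ (0,h₀] the boundary value problem u''(s) + κ(sh)·h²·u(s) = 0 on [0,1], u(0) = 0, u(1) = 1 has a unique solution u_h which is positive on (0,1]; and moreover lim_{h→0⁺} (u_h(t) − t)/h² = (1/6)·t·(1 − t²)·κ(0). (Second-order Taylor expansion σ_κ^{(t)}(h) = t·[1 + (1/6)(1−t²)κ(0)h²] + o(h²) of the distortion coefficient in the length parameter.) -/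
open Set

/-!
With `p(s) = κ(s h) h²`, the initial value problem `w'' + p w = 0`, `w 0 = 0`, `w' 0 = 1` is the
Volterra equation `w s = s - ∫₀ˢ (s - r) p r w r dr`, whose right-hand side is a contraction of
`C([0, 1])` once `|p| ≤ 1 / 8`. Its fixed point `w_h` is `O(h²)`-close to the identity, hence
positive on `(0, 1]`, and `w_h / w_h 1` solves the boundary value problem; it is the only solution
because every solution with `w 0 = 0` is a fixed point of the operator with slope `w' 0`, as is
`w' 0 • w_h`. Dividing the integral equation by `h²` gives
`(w_h s - s) / h² = -∫₀ˢ (s - r) κ(r h) w_h r dr → -κ 0 s³ / 6`, since `w_h → id` uniformly, and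
the expansion of `w_h t / w_h 1` follows.
-/

open Filter Topology MeasureTheory

/-- Cauchy's formula: `∫₀ˢ (s - r) g r dr`, the solution of `w'' = g`, `w 0 = w' 0 = 0`. -/
noncomputable def secondPrimitive (g : ℝ → ℝ) (s : ℝ) : ℝ :=
  s * (∫ r in (0:ℝ)..s, g r) - ∫ r in (0:ℝ)..s, r * g r

lemma secondPrimitive_congr {g₁ g₂ : ℝ → ℝ} {s : ℝ} (h : EqOn g₁ g₂ (uIcc 0 s)) :
    secondPrimitive g₁ s = secondPrimitive g₂ s := by
  rw [secondPrimitive, secondPrimitive, intervalIntegral.integral_congr h,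
    intervalIntegral.integral_congr (f := fun r => r * g₁ r) (g := fun r => r * g₂ r)
      fun r hr => by simp only [h hr]]

lemma secondPrimitive_const_mul (c : ℝ) (g : ℝ → ℝ) (s : ℝ) :
    secondPrimitive (fun r => c * g r) s = c * secondPrimitive g s := by
  simp only [secondPrimitive, mul_left_comm _ c, intervalIntegral.integral_const_mul]
  ring

lemma secondPrimitive_sub {g₁ g₂ : ℝ → ℝ} {s : ℝ} (h₁ : IntervalIntegrable g₁ volume 0 s)
    (h₂ : IntervalIntegrable g₂ volume 0 s) :
    secondPrimitive (fun r => g₁ r - g₂ r) s = secondPrimitive g₁ s - secondPrimitive g₂ s := by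
  have h₁' : IntervalIntegrable (fun r => r * g₁ r) volume 0 s :=
    h₁.continuousOn_mul continuousOn_id
  have h₂' : IntervalIntegrable (fun r => r * g₂ r) volume 0 s :=
    h₂.continuousOn_mul continuousOn_id
  simp only [secondPrimitive, mul_sub, intervalIntegral.integral_sub h₁ h₂,
    intervalIntegral.integral_sub h₁' h₂']
  ring

lemma secondPrimitive_const_mul_id (c s : ℝ) :
    secondPrimitive (fun r => c * r) s = c * s ^ 3 / 6 := by
  have hsq : (fun r : ℝ => r * (c * r)) = fun r => c * r ^ 2 := by ext r; ring
  have hlin : ∫ r in (0:ℝ)..s, c * r = c * (s ^ 2 / 2) := by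
    rw [intervalIntegral.integral_const_mul, integral_id]; ring
  simp only [secondPrimitive, hsq, hlin, intervalIntegral.integral_const_mul, integral_pow]
  ring

lemma abs_secondPrimitive_le {g : ℝ → ℝ} {G s : ℝ} (hs : 0 ≤ s)
    (hg : ∀ r ∈ Icc 0 s, |g r| ≤ G) : |secondPrimitive g s| ≤ 2 * G * s ^ 2 := by
  have hmem : ∀ r ∈ uIoc (0:ℝ) s, r ∈ Icc 0 s := fun r hr =>
    Ioc_subset_Icc_self (by rwa [uIoc_of_le hs] at hr)
  have h₁ : |∫ r in (0:ℝ)..s, g r| ≤ G * s := by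
    simpa [abs_of_nonneg hs] using intervalIntegral.norm_integral_le_of_norm_le_const (f := g)
      fun r hr => hg r (hmem r hr)
  have h₂ : |∫ r in (0:ℝ)..s, r * g r| ≤ s * G * s := by
    have := intervalIntegral.norm_integral_le_of_norm_le_const (a := 0) (b := s)
      (f := fun r => r * g r) (C := s * G) fun r hr => by
        obtain ⟨hr0, hrs⟩ := hmem r hr
        rw [Real.norm_eq_abs, abs_mul, abs_of_nonneg hr0]
        exact mul_le_mul hrs (hg r ⟨hr0, hrs⟩) (abs_nonneg _) hs
    simpa [abs_of_nonneg hs] using this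
  calc |secondPrimitive g s|
      ≤ |s * ∫ r in (0:ℝ)..s, g r| + |∫ r in (0:ℝ)..s, r * g r| := abs_sub _ _
    _ ≤ s * (G * s) + s * G * s := by
      rw [abs_mul, abs_of_nonneg hs]
      exact add_le_add (mul_le_mul_of_nonneg_left h₁ hs) h₂
    _ = 2 * G * s ^ 2 := by ring

lemma hasDerivAt_secondPrimitive {g : ℝ → ℝ} (hg : Continuous g) (s : ℝ) :
    HasDerivAt (secondPrimitive g) (∫ r in (0:ℝ)..s, g r) s := by
  have : HasDerivAt (fun x => x * (∫ r in (0:ℝ)..x, g r) - ∫ r in (0:ℝ)..x, r * g r)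
      (1 * (∫ r in (0:ℝ)..s, g r) + s * g s - s * g s) s :=
    ((hasDerivAt_id' s).mul (hg.integral_hasStrictDerivAt 0 s).hasDerivAt).sub
      ((continuous_id'.mul hg).integral_hasStrictDerivAt 0 s).hasDerivAt
  rwa [one_mul, add_sub_cancel_right] at this

lemma continuous_secondPrimitive {g : ℝ → ℝ} (hg : Continuous g) :
    Continuous (secondPrimitive g) :=
  continuous_iff_continuousAt.2 fun s => (hasDerivAt_secondPrimitive hg s).continuousAt

/-- Taylor's formula of order two with integral remainder. -/
lemma eq_add_secondPrimitive_of_hasDerivWithinAt {w w₁ w₂ : ℝ → ℝ} {s : ℝ} (hs : 0 ≤ s)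
    (hw : ∀ x ∈ Icc 0 s, HasDerivWithinAt w (w₁ x) (Icc 0 s) x)
    (hw₁ : ∀ x ∈ Icc 0 s, HasDerivWithinAt w₁ (w₂ x) (Icc 0 s) x)
    (hw₂ : ContinuousOn w₂ (Icc 0 s)) :
    w s = w 0 + w₁ 0 * s + secondPrimitive w₂ s := by
  have hwc : ContinuousOn w (Icc 0 s) := fun x hx => (hw x hx).continuousWithinAt
  have hw₁c : ContinuousOn w₁ (Icc 0 s) := fun x hx => (hw₁ x hx).continuousWithinAt
  have hint : ∀ {f : ℝ → ℝ}, ContinuousOn f (Icc 0 s) → IntervalIntegrable f volume 0 s :=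
    fun hf => hf.intervalIntegrable_of_Icc hs
  have interior : ∀ {f f' : ℝ → ℝ}, (∀ x ∈ Icc 0 s, HasDerivWithinAt f (f' x) (Icc 0 s) x) →
      ∀ x ∈ Ioo 0 s, HasDerivAt f (f' x) x :=
    fun hf x hx => (hf x (Ioo_subset_Icc_self hx)).hasDerivAt (Icc_mem_nhds hx.1 hx.2)
  have ftc : ∫ r in (0:ℝ)..s, w₁ r = w s - w 0 :=
    intervalIntegral.integral_eq_sub_of_hasDerivAt_of_le hs hwc (interior hw) (hint hw₁c)
  have ftc₁ : ∫ r in (0:ℝ)..s, w₂ r = w₁ s - w₁ 0 :=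
    intervalIntegral.integral_eq_sub_of_hasDerivAt_of_le hs hw₁c (interior hw₁) (hint hw₂)
  have parts : ∫ r in (0:ℝ)..s, (w₁ r + r * w₂ r) = s * w₁ s := by
    simpa using intervalIntegral.integral_eq_sub_of_hasDerivAt_of_le hs
      (continuousOn_id.mul hw₁c)
      (fun x hx => by simpa using (hasDerivAt_id x).mul (interior hw₁ x hx))
      (hint (hw₁c.add (continuousOn_id.mul hw₂)))
  have hint₂ : IntervalIntegrable (fun r => r * w₂ r) volume 0 s :=
    hint (continuousOn_id.mul hw₂)
  rw [intervalIntegral.integral_add (hint hw₁c) hint₂, ftc] at parts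
  rw [secondPrimitive, ftc₁]
  linarith

lemma SturmSol.div_const {κ u u' u'' : ℝ → ℝ} {s : Set ℝ} (h : SturmSol κ u u' u'' s)
    (c : ℝ) :
    SturmSol κ (fun x => u x / c) (fun x => u' x / c) (fun x => u'' x / c) s := by
  obtain ⟨hu, hu', hu'', heq⟩ := h
  exact ⟨fun x hx => (hu x hx).div_const c, fun x hx => (hu' x hx).div_const c,
    hu''.div_const c, fun x hx => by
      change u'' x / c + κ x * (u x / c) = 0
      rw [mul_div_assoc', ← add_div, heq x hx, zero_div]⟩

lemma sturmSol_congr {κ κ' u u' u'' : ℝ → ℝ} {s : Set ℝ} (h : EqOn κ κ' s) :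
    SturmSol κ u u' u'' s ↔ SturmSol κ' u u' u'' s := by
  refine and_congr_right' <| and_congr_right' <| and_congr_right' <| forall₂_congr fun x hx => ?_
  rw [h hx]

lemma SturmSol.eq_sub_secondPrimitive {κ w w₁ w₂ : ℝ → ℝ}
    (h : SturmSol κ w w₁ w₂ (Icc 0 1)) (h0 : w 0 = 0) {s : ℝ} (hs : s ∈ Icc (0:ℝ) 1) :
    w s = w₁ 0 * s - secondPrimitive (fun r => κ r * w r) s := by
  obtain ⟨hw, hw₁, hw₂, heq⟩ := h
  have hsub : Icc 0 s ⊆ Icc (0:ℝ) 1 := Icc_subset_Icc_right hs.2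
  have hw₂eq : secondPrimitive w₂ s = secondPrimitive (fun r => -1 * (κ r * w r)) s :=
    secondPrimitive_congr fun r hr => by
      linear_combination heq r (hsub (uIcc_of_le hs.1 ▸ hr))
  rw [eq_add_secondPrimitive_of_hasDerivWithinAt hs.1
    (fun x hx => (hw x (hsub hx)).mono hsub) (fun x hx => (hw₁ x (hsub hx)).mono hsub)
    (hw₂.mono hsub), hw₂eq, secondPrimitive_const_mul, h0]
  ring

lemma abs_IccExtend_sub_le {a b : ℝ} (hab : a ≤ b) (f g : C(Icc a b, ℝ)) (r : ℝ) :
    |IccExtend hab f r - IccExtend hab g r| ≤ dist f g := by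
  rw [IccExtend_apply, IccExtend_apply, ← Real.dist_eq]
  exact ContinuousMap.dist_apply_le_dist _

lemma continuous_IccExtend {a b : ℝ} (hab : a ≤ b) (f : C(Icc a b, ℝ)) :
    Continuous (IccExtend hab f) :=
  continuous_IccExtend_iff.2 f.continuous

section Volterra

variable {p : ℝ → ℝ}

/-- The integral operator of `w'' + p w = 0`, `w 0 = 0`, `w' 0 = c`, acting on `C([0, 1])`. -/
noncomputable def volterraMap (p : ℝ → ℝ) (hp : Continuous p) (c : ℝ)
    (f : C(Icc (0:ℝ) 1, ℝ)) : C(Icc (0:ℝ) 1, ℝ) :=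
  ⟨fun x => c * x - secondPrimitive (fun r => p r * IccExtend zero_le_one f r) x,
    ((continuous_const.mul continuous_id).sub (continuous_secondPrimitive
      (hp.mul (continuous_IccExtend zero_le_one f)))).comp continuous_subtype_val⟩

lemma contractingWith_volterraMap (hp : Continuous p) (hb : ∀ r, |p r| ≤ 1 / 8) (c : ℝ) :
    ContractingWith (1 / 2) (volterraMap p hp c) := by
  refine ⟨by norm_num, LipschitzWith.of_dist_le_mul fun f g => ?_⟩
  rw [ContinuousMap.dist_le (by positivity)]
  intro x
  have hint : ∀ f : C(Icc (0:ℝ) 1, ℝ),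
      IntervalIntegrable (fun r => p r * IccExtend zero_le_one f r) volume 0 x :=
    fun f => (hp.mul (continuous_IccExtend zero_le_one f)).intervalIntegrable _ _
  have hdiff : volterraMap p hp c f x - volterraMap p hp c g x = -secondPrimitive
      (fun r => p r * IccExtend zero_le_one f r - p r * IccExtend zero_le_one g r) x := by
    rw [secondPrimitive_sub (hint f) (hint g)]
    simp only [volterraMap, ContinuousMap.coe_mk]
    ring
  have hest := abs_secondPrimitive_le (G := 1 / 8 * dist f g)
      (g := fun r => p r * IccExtend zero_le_one f r - p r * IccExtend zero_le_one g r)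
      x.2.1 fun r _ => by
    rw [← mul_sub, abs_mul]
    exact mul_le_mul (hb r) (abs_IccExtend_sub_le zero_le_one f g r) (abs_nonneg _) (by norm_num)
  have hx : (x : ℝ) ^ 2 ≤ 1 := pow_le_one₀ x.2.1 x.2.2
  rw [Real.dist_eq, hdiff, abs_neg]
  push_cast
  nlinarith [dist_nonneg (x := f) (y := g)]

open Classical in
/-- The solution of `w'' + p w = 0`, `w 0 = 0`, `w' 0 = 1` on `[0, 1]`, defined as `0` unless `p`
is continuous with `|p| ≤ 1 / 8`. -/
noncomputable def volterraFix (p : ℝ → ℝ) : C(Icc (0:ℝ) 1, ℝ) :=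
  if h : Continuous p ∧ ∀ r, |p r| ≤ 1 / 8 then
    ContractingWith.fixedPoint _ (contractingWith_volterraMap h.1 h.2 1)
  else 0

/-- The `C²` extension of `volterraFix p` to `ℝ`. -/
noncomputable def unitSlopeSol (p : ℝ → ℝ) (s : ℝ) : ℝ :=
  s - secondPrimitive (fun r => p r * IccExtend zero_le_one (volterraFix p) r) s

lemma unitSlopeSol_zero (p : ℝ → ℝ) : unitSlopeSol p 0 = 0 := by
  simp [unitSlopeSol, secondPrimitive]

lemma isFixedPt_volterraFix (hp : Continuous p) (hb : ∀ r, |p r| ≤ 1 / 8) :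
    Function.IsFixedPt (volterraMap p hp 1) (volterraFix p) := by
  rw [volterraFix, dif_pos ⟨hp, hb⟩]
  exact ContractingWith.fixedPoint_isFixedPt _

lemma unitSlopeSol_eq_volterraFix (hp : Continuous p) (hb : ∀ r, |p r| ≤ 1 / 8)
    (x : Icc (0:ℝ) 1) : unitSlopeSol p x = volterraFix p x := by
  conv_rhs => rw [← isFixedPt_volterraFix hp hb]
  simp only [volterraMap, ContinuousMap.coe_mk, one_mul, unitSlopeSol]

lemma IccExtend_volterraFix (hp : Continuous p) (hb : ∀ r, |p r| ≤ 1 / 8) {r : ℝ}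
    (hr : r ∈ Icc (0:ℝ) 1) : IccExtend zero_le_one (volterraFix p) r = unitSlopeSol p r := by
  rw [IccExtend_of_mem _ _ hr, ← unitSlopeSol_eq_volterraFix hp hb ⟨r, hr⟩]

lemma sturmSol_unitSlopeSol (hp : Continuous p) (hb : ∀ r, |p r| ≤ 1 / 8) :
    SturmSol p (unitSlopeSol p)
      (fun s => 1 - ∫ r in (0:ℝ)..s, p r * IccExtend zero_le_one (volterraFix p) r)
      (fun s => -(p s * unitSlopeSol p s)) (Icc 0 1) := by
  have hg := hp.mul (continuous_IccExtend zero_le_one (volterraFix p))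
  refine ⟨fun s _ =>
    ((hasDerivAt_id' s).sub (hasDerivAt_secondPrimitive hg s)).hasDerivWithinAt, fun s hs => ?_,
    (hp.mul (continuous_id.sub (continuous_secondPrimitive hg))).neg.continuousOn,
    fun s _ => by ring⟩
  have : HasDerivAt
      (fun s => 1 - ∫ r in (0:ℝ)..s, p r * IccExtend zero_le_one (volterraFix p) r)
      (0 - p s * IccExtend zero_le_one (volterraFix p) s) s :=
    (hasDerivAt_const s (1:ℝ)).sub (hg.integral_hasStrictDerivAt 0 s).hasDerivAt
  rw [zero_sub, IccExtend_volterraFix hp hb hs] at this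
  exact this.hasDerivWithinAt

lemma dist_volterraFix_le {ε : ℝ} (hp : Continuous p) (hε : ε ≤ 1 / 8)
    (hpε : ∀ r, |p r| ≤ ε) :
    dist (volterraFix p) ⟨Subtype.val, continuous_subtype_val⟩ ≤ 4 * ε := by
  have hb : ∀ r, |p r| ≤ 1 / 8 := fun r => (hpε r).trans hε
  have hε0 : 0 ≤ ε := (abs_nonneg _).trans (hpε 0)
  set idI : C(Icc (0:ℝ) 1, ℝ) := ⟨Subtype.val, continuous_subtype_val⟩
  have hstep : dist idI (volterraMap p hp 1 idI) ≤ 2 * ε := by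
    rw [ContinuousMap.dist_le (by positivity)]
    intro x
    have hest := abs_secondPrimitive_le (G := ε)
      (g := fun r => p r * IccExtend zero_le_one idI r) x.2.1 fun r _ => by
        have hproj := (projIcc (0:ℝ) 1 zero_le_one r).2
        have hid : |IccExtend zero_le_one idI r| ≤ 1 :=
          abs_le.2 ⟨(neg_nonpos.2 zero_le_one).trans hproj.1, hproj.2⟩
        rw [abs_mul]
        exact (mul_le_mul (hpε r) hid (abs_nonneg _) hε0).trans_eq (mul_one ε)
    have hx : (x : ℝ) ^ 2 ≤ 1 := pow_le_one₀ x.2.1 x.2.2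
    change |(x:ℝ) - (1 * x - secondPrimitive (fun r => p r * IccExtend zero_le_one idI r) x)|
      ≤ 2 * ε
    rw [one_mul, sub_sub_cancel]
    nlinarith
  have := (contractingWith_volterraMap hp hb 1).dist_le_of_fixedPoint idI
    (isFixedPt_volterraFix hp hb)
  rw [dist_comm]
  norm_num at this
  linarith

lemma abs_unitSlopeSol_sub_le {ε : ℝ} (hp : Continuous p) (hε : ε ≤ 1 / 8)
    (hpε : ∀ r, |p r| ≤ ε) {s : ℝ} (hs : s ∈ Icc (0:ℝ) 1) :
    |unitSlopeSol p s - s| ≤ 3 * ε * s ^ 2 := by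
  have hε0 : 0 ≤ ε := (abs_nonneg _).trans (hpε 0)
  have hdist := dist_volterraFix_le hp hε hpε
  have hest := abs_secondPrimitive_le (G := 3 / 2 * ε)
      (g := fun r => p r * IccExtend zero_le_one (volterraFix p) r) hs.1 fun r _ => by
    have hproj := (projIcc (0:ℝ) 1 zero_le_one r).2
    have hF : |IccExtend zero_le_one (volterraFix p) r| ≤ 3 / 2 := by
      have hclose : |IccExtend zero_le_one (volterraFix p) r - projIcc (0:ℝ) 1 zero_le_one r|
          ≤ 4 * ε :=
        (abs_IccExtend_sub_le zero_le_one _ ⟨Subtype.val, continuous_subtype_val⟩ r).trans hdist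
      have := abs_sub_abs_le_abs_sub (IccExtend zero_le_one (volterraFix p) r)
        (projIcc (0:ℝ) 1 zero_le_one r)
      rw [abs_of_nonneg hproj.1] at this
      linarith [hproj.2]
    rw [abs_mul]
    nlinarith [hpε r, abs_nonneg (p r)]
  rw [unitSlopeSol, sub_sub_cancel_left, abs_neg]
  linarith

lemma eqOn_mul_unitSlopeSol (hp : Continuous p) (hb : ∀ r, |p r| ≤ 1 / 8) {w : ℝ → ℝ} {c : ℝ}
    (hw : ContinuousOn w (Icc 0 1))
    (hweq : ∀ s ∈ Icc (0:ℝ) 1, w s = c * s - secondPrimitive (fun r => p r * w r) s) :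
    EqOn w (fun s => c * unitSlopeSol p s) (Icc 0 1) := by
  set wI : C(Icc (0:ℝ) 1, ℝ) := ⟨fun x => w x, hw.domRestrict⟩
  have hfix_w : Function.IsFixedPt (volterraMap p hp c) wI := by
    ext x
    refine ((congrArg (c * x - ·) (secondPrimitive_congr fun r hr => ?_)).trans
      (hweq x x.2).symm)
    rw [uIcc_of_le x.2.1] at hr
    rw [IccExtend_of_mem _ _ (Icc_subset_Icc_right x.2.2 hr)]
    rfl
  have hfix_sol : Function.IsFixedPt (volterraMap p hp c) (c • volterraFix p) := by
    ext x
    have hF := unitSlopeSol_eq_volterraFix hp hb x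
    simp only [volterraMap, ContinuousMap.coe_mk, ContinuousMap.coe_smul, IccExtend_apply,
      Pi.smul_apply, smul_eq_mul, mul_left_comm _ c, secondPrimitive_const_mul]
    rw [← hF, unitSlopeSol, mul_sub]
    rfl
  have hunique := (contractingWith_volterraMap hp hb c).fixedPoint_unique' hfix_w hfix_sol
  intro s hs
  calc w s = wI ⟨s, hs⟩ := rfl
    _ = c * volterraFix p ⟨s, hs⟩ := by rw [hunique]; rfl
    _ = c * unitSlopeSol p s := by rw [unitSlopeSol_eq_volterraFix hp hb ⟨s, hs⟩]

end Volterra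

def IsUniquePosDirichletSol (κ u : ℝ → ℝ) : Prop :=
  (∃ u₁ u₂ : ℝ → ℝ, SturmSol κ u u₁ u₂ (Icc 0 1)) ∧ u 0 = 0 ∧ u 1 = 1 ∧
    (∀ s ∈ Ioc (0:ℝ) 1, 0 < u s) ∧
    ∀ w w₁ w₂ : ℝ → ℝ, SturmSol κ w w₁ w₂ (Icc 0 1) → w 0 = 0 → w 1 = 1 →
      ∀ s ∈ Icc (0:ℝ) 1, w s = u s

lemma IsUniquePosDirichletSol.congr {κ κ' u : ℝ → ℝ} (h : IsUniquePosDirichletSol κ u)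
    (hκ : EqOn κ κ' (Icc 0 1)) : IsUniquePosDirichletSol κ' u := by
  simpa only [IsUniquePosDirichletSol, sturmSol_congr hκ] using h

lemma isUniquePosDirichletSol_unitSlopeSol {p : ℝ → ℝ} (hp : Continuous p)
    (hb : ∀ r, |p r| ≤ 1 / 8) :
    IsUniquePosDirichletSol p (fun s => unitSlopeSol p s / unitSlopeSol p 1) := by
  have hpos : ∀ s ∈ Ioc (0:ℝ) 1, 0 < unitSlopeSol p s := by
    rintro s ⟨hs0, hs1⟩
    have := (abs_le.1 (abs_unitSlopeSol_sub_le hp le_rfl hb ⟨hs0.le, hs1⟩)).1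
    nlinarith
  have h1 : 0 < unitSlopeSol p 1 := hpos 1 ⟨one_pos, le_rfl⟩
  refine ⟨⟨_, _, (sturmSol_unitSlopeSol hp hb).div_const _⟩, by simp [unitSlopeSol_zero],
    div_self h1.ne', fun s hs => div_pos (hpos s hs) h1, ?_⟩
  intro w w₁ w₂ hw hw0 hw1 s hs
  have hsol := eqOn_mul_unitSlopeSol hp hb ((hw.1 · · |>.continuousWithinAt))
    fun x hx => hw.eq_sub_secondPrimitive hw0 hx
  have hc : w₁ 0 * unitSlopeSol p 1 = 1 := (hsol ⟨zero_le_one, le_rfl⟩).symm.trans hw1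
  rw [hsol hs]
  dsimp only
  rw [eq_div_iff h1.ne', mul_right_comm, hc, one_mul]

lemma continuous_secondPrimitive_param {X : Type*} [TopologicalSpace X] {F : X → ℝ → ℝ}
    (hF : Continuous (Function.uncurry F)) (s : ℝ) :
    Continuous fun x => secondPrimitive (F x) s := by
  have hrF : Continuous (Function.uncurry fun x r => r * F x r) :=
    continuous_snd.mul hF
  exact (continuous_const.mul
    (intervalIntegral.continuous_parametric_intervalIntegral_of_continuous' hF 0 s)).sub
    (intervalIntegral.continuous_parametric_intervalIntegral_of_continuous' hrF 0 s)

lemma eventually_mul_sq_le (M : ℝ) {c : ℝ} (hc : 0 < c) : ∀ᶠ h in 𝓝 (0:ℝ), M * h ^ 2 ≤ c := by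
  have : Tendsto (fun h : ℝ => M * h ^ 2) (𝓝 0) (𝓝 0) :=
    (by fun_prop : Continuous fun h : ℝ => M * h ^ 2).tendsto' 0 0 (by simp)
  exact this.eventually (eventually_le_nhds hc)

section Rescaling

variable {κ : ℝ → ℝ} {M : ℝ}

lemma abs_rescaled_le (hM : ∀ x, |κ x| ≤ M) (h r : ℝ) : |κ (r * h) * h ^ 2| ≤ M * h ^ 2 := by
  rw [abs_mul, abs_of_nonneg (sq_nonneg h)]
  exact mul_le_mul_of_nonneg_right (hM _) (sq_nonneg h)

lemma tendsto_volterraFix_rescaled (hκ : Continuous κ) (hM : ∀ x, |κ x| ≤ M) :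
    Tendsto (fun h => volterraFix fun r => κ (r * h) * h ^ 2) (𝓝 0)
      (𝓝 ⟨Subtype.val, continuous_subtype_val⟩) := by
  have hbound : Tendsto (fun h : ℝ => 4 * (M * h ^ 2)) (𝓝 0) (𝓝 0) :=
    (by fun_prop : Continuous fun h : ℝ => 4 * (M * h ^ 2)).tendsto' 0 0 (by simp)
  refine tendsto_iff_dist_tendsto_zero.2
    (squeeze_zero' (.of_forall fun _ => dist_nonneg) ?_ hbound)
  filter_upwards [eventually_mul_sq_le M (c := 1 / 8) (by norm_num)] with h hh
  exact dist_volterraFix_le (by fun_prop) hh (abs_rescaled_le hM h)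

lemma tendsto_unitSlopeSol_rescaled_sub_div_sq (hκ : Continuous κ) (hM : ∀ x, |κ x| ≤ M)
    {s : ℝ} (hs : s ∈ Icc (0:ℝ) 1) :
    Tendsto (fun h => (unitSlopeSol (fun r => κ (r * h) * h ^ 2) s - s) / h ^ 2) (𝓝[≠] 0)
      (𝓝 (-(κ 0 * s ^ 3 / 6))) := by
  set Φ : ℝ × C(Icc (0:ℝ) 1, ℝ) → ℝ := fun q =>
    secondPrimitive (fun r => κ (r * q.1) * IccExtend zero_le_one q.2 r) s
  have hΦ : Continuous Φ := continuous_secondPrimitive_param (by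
    refine (hκ.comp (continuous_snd.mul (continuous_fst.comp continuous_fst))).mul ?_
    exact continuous_eval.comp ((continuous_snd.comp continuous_fst).prodMk
      ((continuous_projIcc (a := (0:ℝ)) (b := 1) (h := zero_le_one)).comp continuous_snd))) s
  have hΦ0 : Φ (0, ⟨Subtype.val, continuous_subtype_val⟩) = κ 0 * s ^ 3 / 6 := by
    rw [← secondPrimitive_const_mul_id]
    refine secondPrimitive_congr fun r hr => ?_
    rw [uIcc_of_le hs.1] at hr
    simp [IccExtend_of_mem _ _ (Icc_subset_Icc_right hs.2 hr)]
  have hlim := (hΦ.tendsto _).comp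
    ((tendsto_id.prodMk_nhds (tendsto_volterraFix_rescaled hκ hM)).mono_left
      (nhdsWithin_le_nhds (s := {0}ᶜ)))
  rw [Function.comp_def, hΦ0] at hlim
  refine hlim.neg.congr' (eventually_nhdsWithin_of_forall fun h (hh : h ≠ 0) => ?_)
  have hscale : secondPrimitive (fun r => κ (r * h) * h ^ 2 *
      IccExtend zero_le_one (volterraFix fun r => κ (r * h) * h ^ 2) r) s
      = h ^ 2 * Φ (h, volterraFix fun r => κ (r * h) * h ^ 2) := by
    rw [← secondPrimitive_const_mul]
    exact congrArg (secondPrimitive · s) (funext fun r => by ring)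
  simp only [id, unitSlopeSol, sub_sub_cancel_left, hscale, neg_div,
    mul_div_cancel_left₀ _ (pow_ne_zero 2 hh)]

lemma tendsto_normalized_unitSlopeSol_rescaled (hκ : Continuous κ) (hM : ∀ x, |κ x| ≤ M)
    {t : ℝ} (ht : t ∈ Icc (0:ℝ) 1) :
    Tendsto (fun h => (unitSlopeSol (fun r => κ (r * h) * h ^ 2) t /
        unitSlopeSol (fun r => κ (r * h) * h ^ 2) 1 - t) / h ^ 2) (𝓝[≠] 0)
      (𝓝 (1 / 6 * t * (1 - t ^ 2) * κ 0)) := by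
  have hA := tendsto_unitSlopeSol_rescaled_sub_div_sq hκ hM ht
  have hB := tendsto_unitSlopeSol_rescaled_sub_div_sq hκ hM ⟨zero_le_one, le_rfl⟩
  have hsq : Tendsto (fun h : ℝ => h ^ 2) (𝓝[≠] 0) (𝓝 0) :=
    ((continuous_pow 2).tendsto' (0:ℝ) 0 (by simp)).mono_left nhdsWithin_le_nhds
  have hone :
      Tendsto (fun h => unitSlopeSol (fun r => κ (r * h) * h ^ 2) 1) (𝓝[≠] 0) (𝓝 1) := by
    have h1 := (tendsto_const_nhds (x := (1:ℝ))).add (hB.mul hsq)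
    rw [mul_zero, add_zero] at h1
    refine h1.congr' ?_
    filter_upwards [self_mem_nhdsWithin] with h (hh : h ≠ 0)
    generalize unitSlopeSol (fun r => κ (r * h) * h ^ 2) 1 = b
    field_simp
    ring
  have hlim := (hA.sub (hB.const_mul t)).div hone one_ne_zero
  rw [show (-(κ 0 * t ^ 3 / 6) - t * -(κ 0 * 1 ^ 3 / 6)) / 1 = 1 / 6 * t * (1 - t ^ 2) * κ 0 by
    ring] at hlim
  refine hlim.congr' ?_
  filter_upwards [self_mem_nhdsWithin, hone.eventually_ne one_ne_zero] with h (hh : h ≠ 0) hne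
  rw [Pi.div_apply]
  generalize unitSlopeSol (fun r => κ (r * h) * h ^ 2) t = a
  generalize unitSlopeSol (fun r => κ (r * h) * h ^ 2) 1 = b at hne ⊢
  field_simp
  ring

end Rescaling

/-- Second-order Taylor expansion
`σ_κ^{(t)}(h) = t·[1 + (1/6)(1−t²)κ(0)h²] + o(h²)` of the distortion coefficient
in the length parameter. -/
theorem distortion_taylor_expansion
    (L : ℝ) (hL : 0 < L)
    (κ : ℝ → ℝ) (hκ : ContinuousOn κ (Icc 0 L))
    (t : ℝ) (ht : t ∈ Ioo (0:ℝ) 1) :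
    ∃ h₀ ∈ Ioc (0:ℝ) L, ∃ u : ℝ → ℝ → ℝ,
      (∀ h ∈ Ioc (0:ℝ) h₀,
        (∃ u₁ u₂ : ℝ → ℝ,
          SturmSol (fun s => κ (s * h) * h ^ 2) (u h) u₁ u₂ (Icc 0 1)) ∧
        u h 0 = 0 ∧ u h 1 = 1 ∧
        (∀ s ∈ Ioc (0:ℝ) 1, 0 < u h s) ∧
        (∀ w w₁ w₂ : ℝ → ℝ,
          SturmSol (fun s => κ (s * h) * h ^ 2) w w₁ w₂ (Icc 0 1) →
          w 0 = 0 → w 1 = 1 → ∀ s ∈ Icc (0:ℝ) 1, w s = u h s)) ∧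
      Filter.Tendsto (fun h => (u h t - t) / h ^ 2)
        (nhdsWithin 0 (Ioi 0))
        (nhds ((1 / 6) * t * (1 - t ^ 2) * κ 0)) := by
  obtain ⟨M, hM⟩ := isCompact_Icc.exists_bound_of_continuousOn hκ
  set κ' := IccExtend hL.le ((Icc 0 L).domRestrict κ)
  have hκ' : Continuous κ' := continuous_IccExtend_iff.2 hκ.domRestrict
  have hκ'M : ∀ x, |κ' x| ≤ M := fun x => hM _ (projIcc 0 L hL.le x).2
  have hκ'eq : ∀ x ∈ Icc 0 L, κ' x = κ x := fun x hx => IccExtend_of_mem _ _ hx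
  obtain ⟨h₁, hh₁, hsmall⟩ := mem_nhdsGT_iff_exists_Ioc_subset.1
    (nhdsWithin_le_nhds (eventually_mul_sq_le M (c := 1 / 8) (by norm_num)))
  refine ⟨min L h₁, ⟨lt_min hL hh₁, min_le_left _ _⟩, fun h s =>
    unitSlopeSol (fun r => κ' (r * h) * h ^ 2) s / unitSlopeSol (fun r => κ' (r * h) * h ^ 2) 1,
    fun h hh => ?_, ?_⟩
  · refine (isUniquePosDirichletSol_unitSlopeSol (by fun_prop) fun r =>
      (abs_rescaled_le hκ'M h r).trans (hsmall (Ioc_subset_Ioc_right (min_le_right _ _) hh))).congr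
      fun s hs => ?_
    have hsh : s * h ∈ Icc 0 L := ⟨mul_nonneg hs.1 hh.1.le,
      (mul_le_of_le_one_left hh.1.le hs.2).trans (hh.2.trans (min_le_left _ _))⟩
    simp only [hκ'eq _ hsh]
  · rw [← hκ'eq 0 ⟨le_rfl, hL.le⟩]
    exact (tendsto_normalized_unitSlopeSol_rescaled hκ' hκ'M (Ioo_subset_Icc_self ht)).mono_left
      (nhdsWithin_mono _ fun x hx => ne_of_gt hx)
end
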